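/- arXiv:2508.10510 — 7 statements merged into one kernel-verified Lean document; each statement's English description precedes it below -/
import Mathlib

section
/- Let F be a finite field, k ≤ n ≤ |F|, and let Γ = (V,E) be an n-RIM whose indexing permutation is the identity (i.e. E(E(v,j), j) = v for all (v,j)). Let P(Γ) := {(v,j) ∈ V × {1,…,n} : E(v,j) = v} be the set of petal indices. Then the dimension of C(Γ,k) as an F-vector space satisfies 2·dim_F C(Γ,k) ≥ (2k − n)·|V| + |P(Γ)|. -/
/-!
Write `σ (v, j) = (E v j, j)`, an involution of `V × Fin n` whose fixed points are the petal
indices. The graph code is the intersection `A ⊓ B` of the space `A` of `σ`-invariant words with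
the space `B` of words whose local views all lie in `RS[n,k]`. Evaluation at `n ≥ k` distinct
points is injective on polynomials of degree `< k`, so `dim B = k |V|`. The space `A` contains the
functions constant on `σ`-orbits, and Burnside's lemma for `ZMod 2` acting through `σ` gives
`2 · #orbits = n |V| + |P(Γ)|`. Conclude with `dim (A ⊓ B) ≥ dim A + dim B - n |V|`.
-/

open Polynomial

/-- The Reed–Solomon code `RS[n,k]` as a submodule of `F^n`: the image of the space of
polynomials of degree `< k` under evaluation at the points `x 1, …, x n`. -/
noncomputable def RSsubmodule (F : Type*) [Field F] (n k : ℕ) (x : Fin n → F) :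
    Submodule F (Fin n → F) :=
  (Polynomial.degreeLT F k).map (LinearMap.pi fun j : Fin n => Polynomial.leval (x j))

/-- The graph code `C(Γ,k)` of an `n`-RIM `Γ = (V,E)` (here with identity indexing
permutation), as a submodule of `F^(V × Fin n)`: edge-consistent words all of whose
local views lie in `RS[n,k]`. -/
noncomputable def graphCode (F : Type*) [Field F] (n k : ℕ) (x : Fin n → F)
    (V : Type*) (E : V → Fin n → V) : Submodule F ((V × Fin n) → F) :=
  (⨅ p : V × Fin n,
      LinearMap.ker ((LinearMap.proj p : ((V × Fin n) → F) →ₗ[F] F)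
        - LinearMap.proj (E p.1 p.2, p.2))) ⊓
  (⨅ v : V,
      Submodule.comap (LinearMap.funLeft F F (fun j : Fin n => (v, j)))
        (RSsubmodule F n k x))

open Function Module

theorem Submodule.finrank_add_finrank_le_finrank_add_finrank_inf {K M : Type*} [DivisionRing K]
    [AddCommGroup M] [Module K M] [FiniteDimensional K M] (s t : Submodule K M) :
    finrank K s + finrank K t ≤ finrank K M + finrank K ↥(s ⊓ t) := by
  rw [← Submodule.finrank_sup_add_finrank_inf_eq]
  exact Nat.add_le_add_right (Submodule.finrank_le _) _

section InvariantFunctions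

variable {ι : Type*}

def invariantFunctions (F : Type*) [Ring F] (σ : ι → ι) : Submodule F (ι → F) :=
  ⨅ i, LinearMap.ker ((LinearMap.proj i : (ι → F) →ₗ[F] F) - LinearMap.proj (σ i))

variable {σ : ι → ι}

theorem mem_invariantFunctions {F : Type*} [Ring F] {f : ι → F} :
    f ∈ invariantFunctions F σ ↔ ∀ i, f i = f (σ i) := by
  simp only [invariantFunctions, Submodule.mem_iInf, LinearMap.mem_ker, LinearMap.sub_apply,
    LinearMap.proj_apply, sub_eq_zero]

abbrev Function.Involutive.zmodTwoAddAction (hσ : Involutive σ) : AddAction (ZMod 2) ι where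
  vadd a i := σ^[a.val] i
  zero_vadd _ := rfl
  add_vadd a b i := by
    change σ^[(a + b).val] i = σ^[a.val] (σ^[b.val] i)
    fin_cases a <;> fin_cases b
    exacts [rfl, rfl, rfl, (hσ i).symm]

theorem Function.Involutive.two_mul_card_orbits [Fintype ι] [DecidableEq ι] (hσ : Involutive σ) :
    letI := hσ.zmodTwoAddAction
    2 * Nat.card (AddAction.orbitRel.Quotient (ZMod 2) ι) =
      Fintype.card ι + Fintype.card {i // σ i = i} := by
  classical
  let := hσ.zmodTwoAddAction
  have burnside := AddAction.sum_card_fixedBy_eq_card_orbits_mul_card_addGroup (ZMod 2) ι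
  have h0 : Fintype.card (AddAction.fixedBy ι (0 : ZMod 2)) = Fintype.card ι := by
    simp
  have h1 : Fintype.card (AddAction.fixedBy ι (1 : ZMod 2)) = Fintype.card {i // σ i = i} :=
    Fintype.card_congr (Equiv.subtypeEquivRight fun _ => Iff.rfl)
  rw [show (Finset.univ : Finset (ZMod 2)) = {0, 1} from rfl, Finset.sum_pair zero_ne_one, h0, h1,
    ZMod.card] at burnside
  rw [burnside, mul_comm, Nat.card_eq_fintype_card]

theorem Function.Involutive.card_add_card_fixed_le_two_mul_finrank_invariantFunctions
    (F : Type*) [DivisionRing F] [Fintype ι] [DecidableEq ι] (hσ : Involutive σ) :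
    Fintype.card ι + Fintype.card {i // σ i = i} ≤ 2 * finrank F (invariantFunctions F σ) := by
  classical
  let := hσ.zmodTwoAddAction
  let π : ι → AddAction.orbitRel.Quotient (ZMod 2) ι := Quotient.mk _
  have hπ : LinearMap.range (LinearMap.funLeft F F π) ≤ invariantFunctions F σ := by
    rintro _ ⟨g, rfl⟩
    exact mem_invariantFunctions.2 fun i => congrArg g (Quotient.sound ⟨1, hσ i⟩)
  have hinj := LinearMap.funLeft_injective_of_surjective F F π Quotient.mk_surjective
  calc Fintype.card ι + Fintype.card {i // σ i = i}
      = 2 * Nat.card (AddAction.orbitRel.Quotient (ZMod 2) ι) := hσ.two_mul_card_orbits.symm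
    _ = 2 * finrank F (LinearMap.range (LinearMap.funLeft F F π)) := by
      rw [LinearMap.finrank_range_of_inj hinj, Module.finrank_fintype_fun_eq_card,
        Nat.card_eq_fintype_card]
    _ ≤ 2 * finrank F (invariantFunctions F σ) := Nat.mul_le_mul_left 2 (Submodule.finrank_mono hπ)

end InvariantFunctions

section LocalViews

variable (F : Type*) [DivisionRing F] {κ : Type*} (V : Type*)

def localViewCode (C : Submodule F (κ → F)) : Submodule F (V × κ → F) :=
  ⨅ v : V, Submodule.comap (LinearMap.funLeft F F (fun j : κ => (v, j))) C

variable {F V}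

theorem mem_localViewCode {C : Submodule F (κ → F)} {f : V × κ → F} :
    f ∈ localViewCode F V C ↔ ∀ v, (fun j => f (v, j)) ∈ C := by
  simp only [localViewCode, Submodule.mem_iInf, Submodule.mem_comap]
  rfl

theorem finrank_localViewCode [Fintype V] [Finite κ] (C : Submodule F (κ → F)) :
    finrank F (localViewCode F V C) = Fintype.card V * finrank F C := by
  let Λ : (V → C) →ₗ[F] (V × κ → F) :=
    (LinearEquiv.curry F F V κ).symm.toLinearMap ∘ₗ C.subtype.compLeft V
  have hinj : Injective Λ := (LinearEquiv.curry F F V κ).symm.injective.comp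
    fun g h hgh => funext fun v => Subtype.ext (congrFun hgh v)
  have hrange : LinearMap.range Λ = localViewCode F V C := by
    ext f
    rw [mem_localViewCode]
    constructor
    · rintro ⟨g, rfl⟩ v
      exact (g v).2
    · exact fun hf => ⟨fun v => ⟨_, hf v⟩, rfl⟩
  rw [← hrange, LinearMap.finrank_range_of_inj hinj, Module.finrank_pi_fintype]
  simp

end LocalViews

theorem finrank_RSsubmodule {F : Type*} [Field F] {n k : ℕ} {x : Fin n → F} (hkn : k ≤ n)
    (hx : Injective x) : finrank F (RSsubmodule F n k x) = k := by
  let ev := LinearMap.pi fun j : Fin n => Polynomial.leval (x j)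
  have hinj : Injective (ev.domRestrict (degreeLT F k)) := by
    refine (injective_iff_map_eq_zero _).2 fun ⟨p, hp⟩ h => Subtype.ext ?_
    refine eq_zero_of_degree_lt_of_eval_index_eq_zero Finset.univ hx.injOn ?_
      fun j _ => congrFun h j
    rw [Finset.card_univ, Fintype.card_fin]
    exact (mem_degreeLT.1 hp).trans_le (by exact_mod_cast hkn)
  rw [RSsubmodule, ← LinearMap.range_domRestrict, LinearMap.finrank_range_of_inj hinj,
    (degreeLTEquiv F k).finrank_eq, Module.finrank_fin_fun]

theorem graphCode_dim_lower_bound_general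
    (F : Type*) [Field F]
    (n k : ℕ) (hkn : k ≤ n)
    (x : Fin n → F) (hx : Function.Injective x)
    (V : Type*) [Fintype V] [DecidableEq V]
    (E : V → Fin n → V)
    (hE : ∀ (v : V) (j : Fin n), E (E v j) j = v) :
    (2 * (k : ℤ) - n) * Fintype.card V
        + Fintype.card {p : V × Fin n // E p.1 p.2 = p.1}
      ≤ 2 * Module.finrank F (graphCode F n k x V E) := by
  let σ : V × Fin n → V × Fin n := fun p => (E p.1 p.2, p.2)
  have hσ : Involutive σ := fun p => by simp [σ, hE]
  have hcode : graphCode F n k x V E =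
      invariantFunctions F σ ⊓ localViewCode F V (RSsubmodule F n k x) := rfl
  have hpetals : Fintype.card {p : V × Fin n // E p.1 p.2 = p.1} = Fintype.card {p // σ p = p} :=
    Fintype.card_congr (Equiv.subtypeEquivRight fun p => by simp [σ, Prod.ext_iff])
  have hinvariant := hσ.card_add_card_fixed_le_two_mul_finrank_invariantFunctions F
  have hlocal : finrank F (localViewCode F V (RSsubmodule F n k x)) = Fintype.card V * k := by
    rw [finrank_localViewCode, finrank_RSsubmodule hkn hx]
  have hinter := (invariantFunctions F σ).finrank_add_finrank_le_finrank_add_finrank_inf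
    (localViewCode F V (RSsubmodule F n k x))
  rw [Module.finrank_fintype_fun_eq_card] at hinter
  rw [Fintype.card_prod, Fintype.card_fin] at hinter hinvariant
  rw [hcode, hpetals]
  zify at hinvariant hinter hlocal
  linarith

/-- **Lower bound on the dimension of a graph code:**
`2 · dim C(Γ,k) ≥ (2k - n)·|V| + |P(Γ)|` where `P(Γ)` is the set of petal indices. -/
theorem graphCode_dim_lower_bound
    (F : Type*) [Field F] [Fintype F]
    (n k : ℕ) (hkn : k ≤ n) (hn : n ≤ Fintype.card F)
    (x : Fin n → F) (hx : Function.Injective x)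
    (V : Type*) [Fintype V] [Nonempty V] [DecidableEq V]
    (E : V → Fin n → V)
    (hE : ∀ (v : V) (j : Fin n), E (E v j) j = v) :
    (2 * (k : ℤ) - n) * Fintype.card V
        + Fintype.card {p : V × Fin n // E p.1 p.2 = p.1}
      ≤ 2 * Module.finrank F (graphCode F n k x V E) :=
  graphCode_dim_lower_bound_general F n k hkn x hx V E hE
end

section
/- Let F be a finite field and let Γ = (V,E) be an n-RIM whose indexing permutation is the identity (i.e. E(E(v,j), j) = v for all (v,j)). Suppose every vertex of Γ has the same number of petal indices, i.e. |{j : E(v,j) = v}| is the same for all v ∈ V. Then for all edge-consistent words f, f' on Γ one has Δ_V(f,f') ≥ Δ_H(f,f'). -/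
open Finset

/-- **Comparison between the vertex distance and the Hamming distance.**
If every vertex of the `n`-RIM `Γ` (with identity indexing permutation) has the same
number of petal indices, then for any two edge-consistent words `f, f'`,
`Δ_V(f,f') ≥ Δ_H(f,f')`, where `Δ_H` is computed over the edge set `E(Γ)`, the
quotient of `V × {1,…,n}` identifying `(v, j)` with `(E(v,j), j)`. -/
theorem vertex_distance_ge_hamming_distance
    (F : Type*) [Field F]
    (n : ℕ) (V : Type*) [Fintype V] [Nonempty V]
    (E : V → Fin n → V)
    (hE : ∀ (v : V) (j : Fin n), E (E v j) j = v)
    (c : ℕ) (hpetals : ∀ v : V, Nat.card {j : Fin n // E v j = v} = c)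
    (f f' : V → Fin n → F)
    (hf : ∀ (v : V) (j : Fin n), f v j = f (E v j) j)
    (hf' : ∀ (v : V) (j : Fin n), f' v j = f' (E v j) j)
    -- the edge set of `Γ` is the quotient of `V × Fin n` by the setoid `sE`
    -- identifying `(v, j)` with `(E v j, j)`
    (sE : Setoid (V × Fin n))
    (hsE : ∀ p q : V × Fin n, sE.r p q ↔ (p = q ∨ q = (E p.1 p.2, p.2))) :
    (Nat.card {e : Quotient sE |
        ∃ p : V × Fin n, Quotient.mk sE p = e ∧ f p.1 p.2 ≠ f' p.1 p.2} : ℝ)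
        / (Nat.card (Quotient sE) : ℝ)
      ≤ (Nat.card {v : V | f v ≠ f' v} : ℝ) / (Fintype.card V : ℝ) := by
  classical
  have hclass : ∀ p r : V × Fin n,
      Quotient.mk sE p = Quotient.mk sE r ↔ (p = r ∨ r = (E p.1 p.2, p.2)) := by
    intro p r
    rw [Quotient.eq]
    exact hsE p r
  -- petal classes have a unique representative
  have hpetal_unique : ∀ p r : V × Fin n, E p.1 p.2 = p.1 →
      Quotient.mk sE p = Quotient.mk sE r → r = p := by
    intro p r hp h
    rcases (hclass p r).1 h with h1 | h1
    · exact h1.symm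
    · rw [h1, hp]
  have hout : ∀ p : V × Fin n, E p.1 p.2 = p.1 → (Quotient.mk sE p).out = p := by
    intro p hp
    exact hpetal_unique p _ hp (Quotient.out_eq _).symm
  -- the fiber of `Quotient.mk` over a class
  have fiber_eq : ∀ e : Quotient sE,
      (univ.filter (fun p : V × Fin n => Quotient.mk sE p = e))
        = {e.out, (E e.out.1 e.out.2, e.out.2)} := by
    intro e
    ext p
    simp only [mem_filter, mem_univ, true_and, mem_insert, mem_singleton]
    constructor
    · intro h
      have h2 : Quotient.mk sE p = Quotient.mk sE e.out := by
        rw [h, Quotient.out_eq]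
      rcases (hclass p e.out).1 h2 with h3 | h3
      · exact Or.inl h3
      · right
        have h4 : e.out.1 = E p.1 p.2 := by rw [h3]
        have h5 : e.out.2 = p.2 := by rw [h3]
        apply Prod.ext
        · simp [h4, h5, hE]
        · simp [h5]
    · intro h
      rcases h with h | h
      · rw [h, Quotient.out_eq]
      · have : Quotient.mk sE e.out = Quotient.mk sE p := (hclass e.out p).2 (Or.inr h)
        rw [← this, Quotient.out_eq]
  have fiber_card : ∀ e : Quotient sE,
      (univ.filter (fun p : V × Fin n => Quotient.mk sE p = e)).card
        = if E e.out.1 e.out.2 = e.out.1 then 1 else 2 := by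
    intro e
    rw [fiber_eq e]
    by_cases hp : E e.out.1 e.out.2 = e.out.1
    · have : (E e.out.1 e.out.2, e.out.2) = e.out := by
        apply Prod.ext <;> simp [hp]
      simp [this, hp]
    · have hne : e.out ≠ (E e.out.1 e.out.2, e.out.2) := by
        intro hcon
        apply hp
        have := congrArg Prod.fst hcon
        simp at this
        exact this.symm
      rw [if_neg hp, card_pair hne]
  -- petal predicate on classes
  set pe : Quotient sE → Prop := fun e => E e.out.1 e.out.2 = e.out.1 with hpe
  -- counting identity (1): |V| * n + #petal classes = 2 * #edges
  have hcount1 : Fintype.card V * n + (univ.filter pe).card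
      = 2 * Fintype.card (Quotient sE) := by
    have h0 : (univ : Finset (V × Fin n)).card
        = ∑ e ∈ (univ : Finset (Quotient sE)),
            (univ.filter (fun p : V × Fin n => Quotient.mk sE p = e)).card :=
      Finset.card_eq_sum_card_fiberwise (fun p _ => mem_univ _)
    have h1 : (univ : Finset (V × Fin n)).card = Fintype.card V * n := by
      simp [card_univ]
    have h2 : (univ.filter pe).card
        = ∑ e ∈ (univ : Finset (Quotient sE)), (if pe e then 1 else 0) := by
      rw [Finset.card_filter]
    have h3 : ∀ e : Quotient sE,
        (if E e.out.1 e.out.2 = e.out.1 then 1 else 2) + (if pe e then 1 else 0) = 2 := by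
      intro e
      by_cases h : pe e <;> simp [hpe] at h ⊢ <;> simp [h]
    calc Fintype.card V * n + (univ.filter pe).card
        = ∑ e ∈ (univ : Finset (Quotient sE)),
            ((if E e.out.1 e.out.2 = e.out.1 then 1 else 2) + (if pe e then 1 else 0)) := by
          rw [Finset.sum_add_distrib, ← h2, ← h1, h0]
          congr 1
          exact Finset.sum_congr rfl (fun e _ => fiber_card e)
      _ = ∑ e ∈ (univ : Finset (Quotient sE)), 2 :=
          Finset.sum_congr rfl (fun e _ => h3 e)
      _ = 2 * Fintype.card (Quotient sE) := by
          simp [card_univ, Nat.mul_comm]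
  -- #petal classes = #petal pairs
  have hPetClasses : (univ.filter pe).card
      = (univ.filter (fun p : V × Fin n => E p.1 p.2 = p.1)).card := by
    refine Finset.card_bij' (fun e _ => e.out) (fun p _ => Quotient.mk sE p) ?_ ?_ ?_ ?_
    · intro e he
      simp only [mem_filter, mem_univ, true_and] at he ⊢
      exact he
    · intro p hp
      simp only [mem_filter, mem_univ, true_and] at hp ⊢
      simp [hpe, hout p hp, hp]
    · intro e _; exact Quotient.out_eq e
    · intro p hp
      simp only [mem_filter, mem_univ, true_and] at hp
      exact hout p hp
  -- #petal pairs = |V| * c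
  have hfilterpet : ∀ v : V, (univ.filter (fun j : Fin n => E v j = v)).card = c := by
    intro v
    have := hpetals v
    rwa [Nat.card_eq_fintype_card, Fintype.card_subtype] at this
  have hPetPairs : (univ.filter (fun p : V × Fin n => E p.1 p.2 = p.1)).card
      = Fintype.card V * c := by
    rw [Finset.card_eq_sum_card_fiberwise
        (f := fun p : V × Fin n => p.1) (t := (univ : Finset V)) (fun p _ => mem_univ _)]
    have : ∀ v : V,
        ((univ.filter (fun p : V × Fin n => E p.1 p.2 = p.1)).filter
          (fun p => p.1 = v)).card = c := by
      intro v
      rw [← hfilterpet v]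
      refine Finset.card_bij' (fun p _ => p.2) (fun j _ => (v, j)) ?_ ?_ ?_ ?_
      · intro p hp
        simp only [mem_filter, mem_univ, true_and] at hp ⊢
        rw [← hp.2]; exact hp.1
      · intro j hj
        simp only [mem_filter, mem_univ, true_and] at hj ⊢
        exact ⟨hj, trivial⟩
      · intro p hp
        simp only [mem_filter, mem_univ, true_and] at hp
        exact Prod.ext hp.2.symm rfl
      · intro j _; rfl
    rw [Finset.sum_congr rfl (fun v _ => this v), Finset.sum_const, card_univ, smul_eq_mul]
  -- bad sets
  set B : Finset V := univ.filter (fun v => f v ≠ f' v) with hB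
  set S : Finset (V × Fin n) := univ.filter (fun p : V × Fin n => f p.1 p.2 ≠ f' p.1 p.2)
    with hS
  set badE : Finset (Quotient sE) := univ.filter
    (fun e => ∃ p : V × Fin n, Quotient.mk sE p = e ∧ f p.1 p.2 ≠ f' p.1 p.2) with hbadE
  -- every pair in a bad class is bad
  have hbadfull : ∀ e ∈ badE, ∀ p : V × Fin n, Quotient.mk sE p = e →
      f p.1 p.2 ≠ f' p.1 p.2 := by
    intro e he p hpe'
    rw [hbadE, mem_filter] at he
    obtain ⟨-, r, hre, hr⟩ := he
    have h2 : Quotient.mk sE p = Quotient.mk sE r := by rw [hpe', hre]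
    rcases (hclass p r).1 h2 with h3 | h3
    · rw [h3]; exact hr
    · have h4 : r.1 = E p.1 p.2 := by rw [h3]
      have h5 : r.2 = p.2 := by rw [h3]
      rw [hf p.1 p.2, hf' p.1 p.2, ← h4, ← h5]
      exact hr
  -- |S| = sum of full fibers over bad classes
  have hS_fiber : S.card = ∑ e ∈ badE,
      (univ.filter (fun p : V × Fin n => Quotient.mk sE p = e)).card := by
    rw [Finset.card_eq_sum_card_fiberwise
        (f := fun p : V × Fin n => Quotient.mk sE p) (t := badE)
        (by
          intro p hp
          rw [hS, Finset.mem_coe, mem_filter] at hp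
          rw [hbadE, Finset.mem_coe, mem_filter]
          exact ⟨mem_univ _, p, rfl, hp.2⟩)]
    apply Finset.sum_congr rfl
    intro e he
    congr 1
    ext p
    simp only [hS, mem_filter, mem_univ, true_and]
    constructor
    · exact fun h => h.2
    · exact fun h => ⟨hbadfull e he p h, h⟩
  -- counting inequality (2): |S| + #bad petal classes = 2 * #bad classes
  have hcount2 : S.card + (badE.filter pe).card = 2 * badE.card := by
    have h2 : (badE.filter pe).card = ∑ e ∈ badE, (if pe e then 1 else 0) :=
      Finset.card_filter _ _
    have h3 : ∀ e : Quotient sE,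
        (if E e.out.1 e.out.2 = e.out.1 then 1 else 2) + (if pe e then 1 else 0) = 2 := by
      intro e
      by_cases h : pe e <;> simp [hpe] at h ⊢ <;> simp [h]
    calc S.card + (badE.filter pe).card
        = ∑ e ∈ badE,
            ((if E e.out.1 e.out.2 = e.out.1 then 1 else 2) + (if pe e then 1 else 0)) := by
          rw [Finset.sum_add_distrib, ← h2, hS_fiber]
          congr 1
          exact Finset.sum_congr rfl (fun e _ => fiber_card e)
      _ = ∑ e ∈ badE, 2 := Finset.sum_congr rfl (fun e _ => h3 e)
      _ = 2 * badE.card := by rw [Finset.sum_const, smul_eq_mul, Nat.mul_comm]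
  -- bad vertices of bad pairs
  have hbadvert : ∀ p : V × Fin n, f p.1 p.2 ≠ f' p.1 p.2 → p.1 ∈ B := by
    intro p hp
    rw [hB, mem_filter]
    exact ⟨mem_univ _, fun hcon => hp (congrFun hcon p.2)⟩
  -- #bad petal classes ≤ c * |B|
  have hBadPet : (badE.filter pe).card
      = (univ.filter (fun p : V × Fin n => E p.1 p.2 = p.1 ∧ f p.1 p.2 ≠ f' p.1 p.2)).card := by
    refine Finset.card_bij' (fun e _ => e.out) (fun p _ => Quotient.mk sE p) ?_ ?_ ?_ ?_
    · intro e he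
      simp only [mem_filter, mem_univ, true_and] at he ⊢
      exact ⟨he.2, hbadfull e he.1 e.out (Quotient.out_eq e)⟩
    · intro p hp
      simp only [hbadE, mem_filter, mem_univ, true_and] at hp ⊢
      exact ⟨⟨p, rfl, hp.2⟩, by simp [hpe, hout p hp.1, hp.1]⟩
    · intro e _; exact Quotient.out_eq e
    · intro p hp
      simp only [mem_filter, mem_univ, true_and] at hp
      exact hout p hp.1
  have hBadPetLe : (badE.filter pe).card ≤ c * B.card := by
    rw [hBadPet]
    rw [Finset.card_eq_sum_card_fiberwise
        (f := fun p : V × Fin n => p.1) (t := B)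
        (by
          intro p hp
          rw [Finset.mem_coe, mem_filter] at hp
          exact hbadvert p hp.2.2)]
    calc ∑ v ∈ B, ((univ.filter (fun p : V × Fin n =>
            E p.1 p.2 = p.1 ∧ f p.1 p.2 ≠ f' p.1 p.2)).filter (fun p => p.1 = v)).card
        ≤ ∑ v ∈ B, c := by
          apply Finset.sum_le_sum
          intro v _
          rw [← hfilterpet v]
          apply Finset.card_le_card_of_injOn (fun p => p.2)
          · intro p hp
            simp only [Finset.mem_coe, mem_filter, mem_univ, true_and] at hp ⊢
            rw [← hp.2]; exact hp.1.1
          · intro p hp q hq hpq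
            simp only [Finset.coe_filter, Set.mem_setOf_eq] at hp hq
            exact Prod.ext (hp.2.trans hq.2.symm) hpq
      _ = c * B.card := by rw [Finset.sum_const, smul_eq_mul, Nat.mul_comm]
  -- |S| ≤ n * |B|
  have hSLe : S.card ≤ n * B.card := by
    rw [Finset.card_eq_sum_card_fiberwise
        (f := fun p : V × Fin n => p.1) (t := B)
        (by
          intro p hp
          rw [hS, Finset.mem_coe, mem_filter] at hp
          exact hbadvert p hp.2)]
    calc ∑ v ∈ B, (S.filter (fun p => p.1 = v)).card
        ≤ ∑ v ∈ B, n := by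
          apply Finset.sum_le_sum
          intro v _
          calc (S.filter (fun p => p.1 = v)).card
              ≤ (univ : Finset (Fin n)).card := by
                apply Finset.card_le_card_of_injOn (fun p => p.2)
                · intro p _; exact mem_univ _
                · intro p hp q hq hpq
                  simp only [Finset.coe_filter, Set.mem_setOf_eq] at hp hq
                  exact Prod.ext (hp.2.trans hq.2.symm) hpq
            _ = n := by simp
      _ = n * B.card := by rw [Finset.sum_const, smul_eq_mul, Nat.mul_comm]
  -- main natural-number inequalities
  have key1 : Fintype.card V * (n + c) = 2 * Fintype.card (Quotient sE) := by
    rw [Nat.mul_add, ← hcount1, hPetClasses, hPetPairs]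
  have key2 : 2 * badE.card ≤ (n + c) * B.card := by
    rw [← hcount2, Nat.add_mul]
    exact Nat.add_le_add hSLe hBadPetLe
  -- translate the goal into Finset cards
  have hcard1 : Nat.card {e : Quotient sE |
      ∃ p : V × Fin n, Quotient.mk sE p = e ∧ f p.1 p.2 ≠ f' p.1 p.2} = badE.card := by
    rw [Nat.card_eq_fintype_card]
    rw [hbadE]
    convert Fintype.card_subtype
      (fun e : Quotient sE =>
        ∃ p : V × Fin n, Quotient.mk sE p = e ∧ f p.1 p.2 ≠ f' p.1 p.2)
    simp only [Set.mem_setOf_eq]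
  have hcard2 : Nat.card {v : V | f v ≠ f' v} = B.card := by
    rw [Nat.card_eq_fintype_card, hB]
    convert Fintype.card_subtype (fun v : V => f v ≠ f' v)
  have hcard3 : Nat.card (Quotient sE) = Fintype.card (Quotient sE) :=
    Nat.card_eq_fintype_card
  rw [hcard1, hcard2, hcard3]
  have hV : (0 : ℝ) < Fintype.card V := by
    exact_mod_cast Fintype.card_pos
  by_cases hQ : Fintype.card (Quotient sE) = 0
  · have hbad0 : badE.card = 0 := by
      have := Finset.card_le_card (Finset.subset_univ badE)
      rw [card_univ, hQ] at this
      omega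
    rw [hbad0, hQ]
    simp only [Nat.cast_zero, zero_div]
    exact div_nonneg (Nat.cast_nonneg _) (Nat.cast_nonneg _)
  · have hQ' : (0 : ℝ) < Fintype.card (Quotient sE) := by
      have : 0 < Fintype.card (Quotient sE) := Nat.pos_of_ne_zero hQ
      exact_mod_cast this
    rw [div_le_div_iff₀ hQ' hV]
    have hnat : badE.card * Fintype.card V * 2 ≤ B.card * Fintype.card (Quotient sE) * 2 := by
      calc badE.card * Fintype.card V * 2 = (2 * badE.card) * Fintype.card V := by ring
        _ ≤ ((n + c) * B.card) * Fintype.card V := Nat.mul_le_mul_right _ key2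
        _ = B.card * (Fintype.card V * (n + c)) := by ring
        _ = B.card * (2 * Fintype.card (Quotient sE)) := by rw [key1]
        _ = B.card * Fintype.card (Quotient sE) * 2 := by ring
    have : (badE.card : ℝ) * Fintype.card V * 2 ≤ B.card * Fintype.card (Quotient sE) * 2 := by
      exact_mod_cast hnat
    linarith
end

section
/- (Commit soundness.) Let F be a finite field, 1 ≤ k < n ≤ |F|, ε > 0, Γ = (V,E) an n-RIM, and (V₀,…,V_{m−1}) a flowering cut collection of order m ≥ 2 on Γ with isomorphisms φ_i and multiplicity function #. Let Γ' := Γ|_{V₀}, C := C(Γ,k), C' := C(Γ',k). Let w : V → ℝ be strictly positive and invariant under the cut isomorphisms, and let w̃(v) := w(v)/#v. Then for every word f on Γ, the set {ρ ∈ F : Δ_{w̃}(Fold(f,ρ), C') < Δ_w(f, C) − ε} has at most (m−1)/ε elements; equivalently, for ρ chosen uniformly in F, the probability that Δ_{w̃}(Fold(f,ρ), C') < Δ_w(f, C) − ε is at most (m−1)/(ε·|F|). -/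
open Polynomial
open scoped Classical

/-- The Reed–Solomon code `RS[n,k]` on evaluation points `x`: evaluations of
polynomials of degree `< k` (i.e. degree at most `k - 1`). -/
def RScode (F : Type*) [Field F] (n k : ℕ) (x : Fin n → F) : Set (Fin n → F) :=
  {c | ∃ P : Polynomial F, P.degree < (k : WithBot ℕ) ∧ ∀ j, c j = P.eval (x j)}

/-- The multiplicity `#v` of a vertex: the number of cuts containing it. -/
def cutMultiplicity {V : Type*} [DecidableEq V] {m : ℕ} (Vsets : Fin m → Finset V)
    (v : V) : ℕ :=
  (Finset.univ.filter fun i : Fin m => v ∈ Vsets i).card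

/-- Relative `w`-weighted vertex distance between two words, over the vertex set `T`:
`Δ_w(f,g) = |{v ∈ T : f(v,·) ≠ g(v,·)}|_w / |T|_w`. -/
noncomputable def wVertexDist {V : Type*} {F : Type*} {n : ℕ}
    (w : V → ℝ) (T : Finset V) (f g : V → Fin n → F) : ℝ :=
  (∑ v ∈ T.filter (fun v => f v ≠ g v), w v) / (∑ v ∈ T, w v)

/-- Relative `w`-weighted vertex distance from a word to a set of words. -/
noncomputable def wVertexDistToSet {V : Type*} {F : Type*} {n : ℕ}
    (w : V → ℝ) (T : Finset V) (f : V → Fin n → F) (C : Set (V → Fin n → F)) : ℝ :=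
  sInf ((fun g => wVertexDist w T f g) '' C)

/-- The Reed–Solomon code as a submodule. -/
noncomputable def RSsub (F : Type*) [Field F] (n k : ℕ) (x : Fin n → F) :
    Submodule F (Fin n → F) :=
  (Polynomial.degreeLT F k).map (LinearMap.pi fun j => Polynomial.leval (x j))

lemma mem_RSsub_iff {F : Type*} [Field F] {n k : ℕ} {x : Fin n → F} {c : Fin n → F} :
    c ∈ RSsub F n k x ↔ c ∈ RScode F n k x := by
  constructor
  · rintro ⟨P, hP, rfl⟩
    exact ⟨P, Polynomial.mem_degreeLT.1 hP, fun j => rfl⟩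
  · rintro ⟨P, hP, hc⟩
    exact ⟨P, Polynomial.mem_degreeLT.2 hP, by funext j; exact (hc j).symm⟩

/-- Key counting lemma: if some coefficient of the curve `ρ ↦ ∑ ρ^i • g i` lies outside
the subspace `W`, then the curve lies in `W` for at most `m-1` values of `ρ`. -/
lemma curve_card_le {F M : Type*} [Field F] [Fintype F] [AddCommGroup M] [Module F M]
    (W : Submodule F M) {m : ℕ} (g : Fin m → M) (i₀ : Fin m) (hg : g i₀ ∉ W) :
    (Finset.univ.filter fun ρ : F => (∑ i : Fin m, ρ ^ (i : ℕ) • g i) ∈ W).card ≤ m - 1 := by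
  classical
  set q := W.mkQ with hq
  have hq0 : q (g i₀) ≠ 0 := by
    intro h
    rw [hq, Submodule.mkQ_apply, Submodule.Quotient.mk_eq_zero] at h
    exact hg h
  obtain ⟨φ, hφ⟩ : ∃ φ : Module.Dual F (M ⧸ W), φ (q (g i₀)) ≠ 0 := by
    by_contra h
    push_neg at h
    exact hq0 ((Module.forall_dual_apply_eq_zero_iff F _).1 h)
  set lam : M →ₗ[F] F := φ.comp q with hlam
  set p : Polynomial F := ∑ i : Fin m, Polynomial.C (lam (g i)) * Polynomial.X ^ (i : ℕ) with hp
  have hcoeff : p.coeff (i₀ : ℕ) = lam (g i₀) := by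
    rw [hp, Polynomial.finset_sum_coeff]
    rw [Finset.sum_eq_single i₀]
    · simp
    · intro b _ hb
      have hne : (i₀ : ℕ) ≠ (b : ℕ) := fun h => hb (Fin.ext h.symm)
      simp [Polynomial.coeff_C_mul, Polynomial.coeff_X_pow, hne]
    · simp
  have hpne : p ≠ 0 := fun h => hφ (by rw [h, Polynomial.coeff_zero] at hcoeff; exact hcoeff.symm)
  have hdeg : p.natDegree ≤ m - 1 := by
    have : p.degree ≤ ((m - 1 : ℕ) : WithBot ℕ) := by
      rw [hp]
      refine le_trans (Polynomial.degree_sum_le _ _) ?_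
      refine Finset.sup_le fun i _ => ?_
      refine le_trans (Polynomial.degree_C_mul_X_pow_le _ _) ?_
      exact_mod_cast Nat.cast_le.2 (Nat.le_sub_one_of_lt i.isLt)
    exact Polynomial.natDegree_le_iff_degree_le.2 this
  refine le_trans ?_ hdeg
  have hsub : (Finset.univ.filter fun ρ : F => (∑ i : Fin m, ρ ^ (i : ℕ) • g i) ∈ W)
      ⊆ p.roots.toFinset := by
    intro ρ hρ
    rw [Finset.mem_filter] at hρ
    rw [Multiset.mem_toFinset, Polynomial.mem_roots hpne]
    have h0 : lam (∑ i : Fin m, ρ ^ (i : ℕ) • g i) = 0 := by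
      rw [hlam, LinearMap.comp_apply]
      have hz : q (∑ i : Fin m, ρ ^ (i : ℕ) • g i) = 0 := by
        rw [hq, Submodule.mkQ_apply, Submodule.Quotient.mk_eq_zero]
        exact hρ.2
      rw [hz, map_zero]
    have heval : p.eval ρ = lam (∑ i : Fin m, ρ ^ (i : ℕ) • g i) := by
      rw [map_sum, hp, Polynomial.eval_finset_sum]
      simp only [map_smul, smul_eq_mul, Polynomial.eval_mul, Polynomial.eval_C,
        Polynomial.eval_pow, Polynomial.eval_X]
      exact Finset.sum_congr rfl fun i _ => mul_comm _ _
    exact heval.trans h0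
  calc _ ≤ p.roots.toFinset.card := Finset.card_le_card hsub
    _ ≤ Multiset.card p.roots := Multiset.toFinset_card_le _
    _ ≤ p.natDegree := Polynomial.card_roots' p

lemma wVertexDistToSet_le_of_mem {V F : Type*} {n : ℕ} (w : V → ℝ) (T : Finset V)
    (f g₀ : V → Fin n → F) (C : Set (V → Fin n → F)) (hg : g₀ ∈ C)
    (hw : ∀ v, 0 ≤ w v) :
    wVertexDistToSet w T f C ≤ wVertexDist w T f g₀ := by
  apply csInf_le
  · refine ⟨0, fun y hy => ?_⟩
    obtain ⟨g, -, rfl⟩ := hy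
    exact div_nonneg (Finset.sum_nonneg fun v _ => hw v) (Finset.sum_nonneg fun v _ => hw v)
  · exact ⟨g₀, hg, rfl⟩

lemma le_wVertexDistToSet {V F : Type*} {n : ℕ} (w : V → ℝ) (T : Finset V)
    (f : V → Fin n → F) (C : Set (V → Fin n → F)) (hC : C.Nonempty) (D : Finset V)
    (hD : D ⊆ T) (hw : ∀ v, 0 ≤ w v)
    (h : ∀ g ∈ C, ∀ v ∈ D, f v ≠ g v) :
    (∑ v ∈ D, w v) / (∑ v ∈ T, w v) ≤ wVertexDistToSet w T f C := by
  apply le_csInf (hC.image _)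
  rintro y ⟨g, hg, rfl⟩
  refine div_le_div_of_nonneg_right ?_ (Finset.sum_nonneg fun v _ => hw v)
  refine Finset.sum_le_sum_of_subset_of_nonneg ?_ (fun v _ _ => hw v)
  intro v hv
  exact Finset.mem_filter.2 ⟨hD hv, h g hg v hv⟩

lemma sum_bijOn {α : Type*} {M : Type*} [AddCommMonoid M] {s t : Finset α} {g : α → α}
    (h : Set.BijOn g ↑s ↑t) (f : α → M) : ∑ v ∈ t, f v = ∑ u ∈ s, f (g u) :=
  (Finset.sum_nbij g (fun _ ha => h.mapsTo ha) h.injOn h.surjOn (fun _ _ => rfl)).symm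

/-- **Commit soundness of the flowering protocol.** For any word `f` on `Γ`, at most
`(m-1)/ε` values of the randomness `ρ` make the folding `Fold(f,ρ)` closer (in
`w̃`-weighted distance) to the cut code `C'` than `Δ_w(f,C) - ε`; equivalently, for
uniform `ρ`, the probability of this event is at most `(m-1)/(ε·|F|)`. -/
theorem commit_soundness
    (F : Type*) [Field F] [Fintype F]
    (n k : ℕ) (hk : 1 ≤ k) (hkn : k < n) (hn : n ≤ Fintype.card F)
    (x : Fin n → F) (hx : Function.Injective x)
    (V : Type*) [Fintype V] [Nonempty V] [DecidableEq V]
    (E : V → Fin n → V) (jbar : Equiv.Perm (Fin n))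
    (hE : ∀ (v : V) (j : Fin n), E (E v j) (jbar j) = v)
    (m : ℕ) (hm : 2 ≤ m)
    (i0 : Fin m) (hi0 : (i0 : ℕ) = 0)
    (Vsets : Fin m → Finset V)
    (hcover : ∀ v : V, ∃ i : Fin m, v ∈ Vsets i)
    (φ : Fin m → V → V)
    (hφ0 : ∀ v ∈ Vsets i0, φ i0 v = v)
    (hφbij : ∀ i : Fin m, Set.BijOn (φ i) (Vsets i0 : Set V) (Vsets i : Set V))
    (hφedge : ∀ (i : Fin m), ∀ v ∈ Vsets i0, ∀ j : Fin n,
      φ i (if E v j ∈ Vsets i0 then E v j else v)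
        = if E (φ i v) j ∈ Vsets i then E (φ i v) j else φ i v)
    (hmultInv : ∀ (i : Fin m), ∀ v ∈ Vsets i0,
      cutMultiplicity Vsets (φ i v) = cutMultiplicity Vsets v)
    (w : V → ℝ) (hw : ∀ v : V, 0 < w v)
    (hwInv : ∀ (i : Fin m), ∀ v ∈ Vsets i0, w (φ i v) = w v)
    (ε : ℝ) (hε : 0 < ε)
    (f : V → Fin n → F) :
    ((Nat.card {ρ : F |
        wVertexDistToSet (fun v => w v / (cutMultiplicity Vsets v : ℝ)) (Vsets i0)
            (fun v j => ∑ i : Fin m, ρ ^ (i : ℕ) * f (φ i v) j)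
            {g : V → Fin n → F | ∀ v ∈ Vsets i0, g v ∈ RScode F n k x}
          < wVertexDistToSet w Finset.univ f
              {g : V → Fin n → F | ∀ v : V, g v ∈ RScode F n k x} - ε} : ℝ)
        ≤ ((m : ℝ) - 1) / ε)
    ∧ ((Nat.card {ρ : F |
        wVertexDistToSet (fun v => w v / (cutMultiplicity Vsets v : ℝ)) (Vsets i0)
            (fun v j => ∑ i : Fin m, ρ ^ (i : ℕ) * f (φ i v) j)
            {g : V → Fin n → F | ∀ v ∈ Vsets i0, g v ∈ RScode F n k x}
          < wVertexDistToSet w Finset.univ f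
              {g : V → Fin n → F | ∀ v : V, g v ∈ RScode F n k x} - ε} : ℝ)
          / (Fintype.card F : ℝ)
        ≤ ((m : ℝ) - 1) / (ε * Fintype.card F)) := by
  set W := RSsub F n k x with hW
  set wt : V → ℝ := fun v => w v / (cutMultiplicity Vsets v : ℝ) with hwt
  have hmulpos : ∀ v : V, 0 < (cutMultiplicity Vsets v : ℝ) := by
    intro v
    obtain ⟨i, hi⟩ := hcover v
    have : 0 < cutMultiplicity Vsets v :=
      Finset.card_pos.2 ⟨i, by simp [cutMultiplicity, hi]⟩
    exact_mod_cast this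
  have hwtpos : ∀ v, 0 < wt v := fun v => div_pos (hw v) (hmulpos v)
  have hwtnn : ∀ v, 0 ≤ wt v := fun v => (hwtpos v).le
  set W0 := Vsets i0 with hW0def
  have hW0ne : W0.Nonempty := by
    obtain ⟨i, hi⟩ := hcover (Classical.arbitrary V)
    obtain ⟨u, hu, -⟩ := (hφbij i).surjOn hi
    exact ⟨u, hu⟩
  set S0 : ℝ := ∑ v ∈ W0, wt v with hS0def
  have hS0 : 0 < S0 := Finset.sum_pos (fun v _ => hwtpos v) hW0ne
  have hwtInv : ∀ i : Fin m, ∀ u ∈ W0, wt (φ i u) = wt u := by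
    intro i u hu
    simp only [hwt, hwInv i u hu, hmultInv i u hu]
  set Fld : F → V → Fin n → F := fun ρ v => ∑ i : Fin m, ρ ^ (i : ℕ) • f (φ i v) with hFld
  have hFldeq : ∀ ρ : F,
      (fun v (j : Fin n) => ∑ i : Fin m, ρ ^ (i : ℕ) * f (φ i v) j) = Fld ρ := by
    intro ρ
    funext v j
    simp [hFld, Finset.sum_apply]
  set C : Set (V → Fin n → F) := {g | ∀ v : V, g v ∈ RScode F n k x} with hC
  set C' : Set (V → Fin n → F) := {g | ∀ v ∈ W0, g v ∈ RScode F n k x} with hC'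
  have h0RS : (0 : Fin n → F) ∈ RScode F n k x := mem_RSsub_iff.1 (Submodule.zero_mem _)
  have hCne : C.Nonempty := ⟨fun _ => 0, fun v => h0RS⟩
  have hC'ne : C'.Nonempty := ⟨fun _ => 0, fun v _ => h0RS⟩
  simp only [hFldeq]
  set Bad : Finset F := Finset.univ.filter (fun ρ =>
    wVertexDistToSet wt W0 (Fld ρ) C' < wVertexDistToSet w Finset.univ f C - ε) with hBad
  have hsetBad : {ρ : F |
      wVertexDistToSet wt W0 (Fld ρ) C' < wVertexDistToSet w Finset.univ f C - ε}
      = (↑Bad : Set F) := by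
    ext ρ
    simp [hBad]
  rw [hsetBad, Nat.card_coe_set_eq, Set.ncard_coe_finset]
  have hm2 : (2 : ℝ) ≤ (m : ℝ) := by exact_mod_cast hm
  suffices hmain : (Bad.card : ℝ) * ε ≤ (m : ℝ) - 1 by
    constructor
    · exact (le_div_iff₀ hε).2 hmain
    · rw [← div_div]
      refine div_le_div_of_nonneg_right ((le_div_iff₀ hε).2 hmain) (by positivity)
  rcases Finset.eq_empty_or_nonempty Bad with hB | hBne
  · rw [hB]
    simp
    nlinarith
  -- main case
  set G : Finset V := W0.filter (fun v => ∀ i, f (φ i v) ∈ W) with hG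
  have hWGsub : W0 \ G ⊆ W0 := Finset.sdiff_subset
  -- upper bound on the distance of f to C
  have hδ : wVertexDistToSet w Finset.univ f C ≤ (∑ v ∈ W0 \ G, wt v) / S0 := by
    set g₀ : V → Fin n → F := fun v => if f v ∈ W then f v else 0 with hg₀
    have hg₀C : g₀ ∈ C := by
      intro v
      by_cases hv : f v ∈ W
      · simpa [hg₀, hv] using mem_RSsub_iff.1 hv
      · simp [hg₀, hv, h0RS]
    have h1 : wVertexDistToSet w Finset.univ f C ≤ wVertexDist w Finset.univ f g₀ :=
      wVertexDistToSet_le_of_mem _ _ _ _ _ hg₀C (fun v => (hw v).le)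
    set NB : Finset V := Finset.univ.filter (fun v => f v ∉ W) with hNB
    have h2 : wVertexDist w Finset.univ f g₀ ≤ (∑ v ∈ NB, w v) / (∑ v, w v) := by
      unfold wVertexDist
      refine div_le_div_of_nonneg_right ?_ (Finset.sum_nonneg fun v _ => (hw v).le)
      refine Finset.sum_le_sum_of_subset_of_nonneg ?_ (fun v _ _ => (hw v).le)
      intro v hv
      rw [Finset.mem_filter] at hv
      rw [hNB, Finset.mem_filter]
      refine ⟨Finset.mem_univ _, fun hfv => ?_⟩
      exact hv.2 (by simp [hg₀, hfv])
    have hw_eq : ∀ v : V, w v = (cutMultiplicity Vsets v : ℝ) * wt v := by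
      intro v
      rw [hwt]
      field_simp
      rw [mul_div_assoc, div_self (hmulpos v).ne', mul_one]
    have hcnt : ∀ s : Finset V,
        ∑ v ∈ s, w v = ∑ i : Fin m, ∑ v ∈ s.filter (· ∈ Vsets i), wt v := by
      intro s
      calc ∑ v ∈ s, w v
          = ∑ v ∈ s, ∑ i : Fin m, if v ∈ Vsets i then wt v else 0 := by
            refine Finset.sum_congr rfl fun v _ => ?_
            rw [hw_eq v, ← Finset.sum_filter, Finset.sum_const, nsmul_eq_mul]
            rfl
        _ = ∑ i : Fin m, ∑ v ∈ s, if v ∈ Vsets i then wt v else 0 := Finset.sum_comm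
        _ = ∑ i : Fin m, ∑ v ∈ s.filter (· ∈ Vsets i), wt v := by
            exact Finset.sum_congr rfl fun i _ => (Finset.sum_filter _ _).symm
    have huniv : ∑ v : V, w v = (m : ℝ) * S0 := by
      rw [hcnt Finset.univ]
      have hone : ∀ i : Fin m, ∑ v ∈ Finset.univ.filter (· ∈ Vsets i), wt v = S0 := by
        intro i
        have hfe : Finset.univ.filter (· ∈ Vsets i) = Vsets i := by
          ext v; simp
        rw [hfe, sum_bijOn (hφbij i) wt]
        exact Finset.sum_congr rfl fun u hu => hwtInv i u hu
      rw [Finset.sum_congr rfl fun i _ => hone i, Finset.sum_const, Finset.card_univ,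
        Fintype.card_fin, nsmul_eq_mul]
    have hNBle : ∑ v ∈ NB, w v ≤ (m : ℝ) * ∑ v ∈ W0 \ G, wt v := by
      rw [hcnt NB]
      have hper : ∀ i : Fin m,
          ∑ v ∈ NB.filter (· ∈ Vsets i), wt v ≤ ∑ v ∈ W0 \ G, wt v := by
        intro i
        have hfe : NB.filter (· ∈ Vsets i) = (Vsets i).filter (fun v => f v ∉ W) := by
          ext v
          simp only [hNB, Finset.mem_filter, Finset.mem_univ, true_and]
          tauto
        rw [hfe]
        have h1' : ∑ v ∈ (Vsets i).filter (fun v => f v ∉ W), wt v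
            = ∑ u ∈ W0.filter (fun u => f (φ i u) ∉ W), wt u := by
          rw [Finset.sum_filter, sum_bijOn (hφbij i) (fun v => if f v ∉ W then wt v else 0),
            Finset.sum_filter]
          refine Finset.sum_congr rfl fun u hu => ?_
          by_cases hfu : f (φ i u) ∈ W <;> simp [hfu, hwtInv i u hu]
        rw [h1']
        refine Finset.sum_le_sum_of_subset_of_nonneg ?_ (fun v _ _ => hwtnn v)
        intro u hu
        rw [Finset.mem_filter] at hu
        rw [Finset.mem_sdiff]
        exact ⟨hu.1, fun hGmem => hu.2 ((Finset.mem_filter.1 hGmem).2 i)⟩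
      calc ∑ i : Fin m, ∑ v ∈ NB.filter (· ∈ Vsets i), wt v
          ≤ ∑ _i : Fin m, ∑ v ∈ W0 \ G, wt v := Finset.sum_le_sum fun i _ => hper i
        _ = (m : ℝ) * ∑ v ∈ W0 \ G, wt v := by
            rw [Finset.sum_const, Finset.card_univ, Fintype.card_fin, nsmul_eq_mul]
    have hfin : (∑ v ∈ NB, w v) / (∑ v, w v) ≤ (∑ v ∈ W0 \ G, wt v) / S0 := by
      rw [huniv]
      have hm0 : (0 : ℝ) < m := by linarith
      calc (∑ v ∈ NB, w v) / ((m : ℝ) * S0)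
          ≤ ((m : ℝ) * ∑ v ∈ W0 \ G, wt v) / ((m : ℝ) * S0) :=
            div_le_div_of_nonneg_right hNBle (by positivity)
        _ = (∑ v ∈ W0 \ G, wt v) / S0 := mul_div_mul_left _ _ hm0.ne'
    exact h1.trans (h2.trans hfin)
  -- per-ρ lower bound
  have hperρ : ∀ ρ ∈ Bad,
      ε * S0 < ∑ v ∈ (W0 \ G).filter (fun v => Fld ρ v ∈ W), wt v := by
    intro ρ hρ
    have hρP : wVertexDistToSet wt W0 (Fld ρ) C'
        < wVertexDistToSet w Finset.univ f C - ε := (Finset.mem_filter.1 hρ).2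
    set Bρ : Finset V := W0.filter (fun v => Fld ρ v ∉ W) with hBρ
    have hBρle : (∑ v ∈ Bρ, wt v) / S0 ≤ wVertexDistToSet wt W0 (Fld ρ) C' := by
      refine le_wVertexDistToSet wt W0 (Fld ρ) C' hC'ne Bρ (Finset.filter_subset _ _)
        hwtnn ?_
      intro g hg v hv
      rw [Finset.mem_filter] at hv
      intro hEq
      exact hv.2 (by rw [hEq]; exact mem_RSsub_iff.2 (hg v hv.1))
    have hchain : (∑ v ∈ Bρ, wt v) / S0 < (∑ v ∈ W0 \ G, wt v) / S0 - ε := by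
      have := hρP.trans_le (by linarith [hδ] : wVertexDistToSet w Finset.univ f C - ε
        ≤ (∑ v ∈ W0 \ G, wt v) / S0 - ε)
      exact hBρle.trans_lt this
    have hBρsub : Bρ ⊆ W0 \ G := by
      intro v hv
      rw [hBρ, Finset.mem_filter] at hv
      rw [Finset.mem_sdiff]
      refine ⟨hv.1, fun hvG => ?_⟩
      have hall := (Finset.mem_filter.1 hvG).2
      exact hv.2 (Submodule.sum_mem _ fun i _ => Submodule.smul_mem _ _ (hall i))
    have hsplit : ∑ v ∈ (W0 \ G) \ Bρ, wt v
        = ∑ v ∈ W0 \ G, wt v - ∑ v ∈ Bρ, wt v := by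
      rw [eq_sub_iff_add_eq, Finset.sum_sdiff hBρsub]
    have hAeq : (W0 \ G).filter (fun v => Fld ρ v ∈ W) = (W0 \ G) \ Bρ := by
      ext v
      simp only [hBρ, Finset.mem_filter, Finset.mem_sdiff]
      tauto
    rw [hAeq, hsplit]
    have hmul : (∑ v ∈ Bρ, wt v) < (∑ v ∈ W0 \ G, wt v) - ε * S0 := by
      have h' := mul_lt_mul_of_pos_right hchain hS0
      rw [sub_mul, div_mul_cancel₀ _ hS0.ne', div_mul_cancel₀ _ hS0.ne'] at h'
      linarith
    linarith
  -- double counting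
  have hm1cast : ((m - 1 : ℕ) : ℝ) = (m : ℝ) - 1 := by
    have h1m : 1 ≤ m := le_trans one_le_two hm
    push_cast [Nat.cast_sub h1m]
    ring
  have hupper : ∑ ρ ∈ Bad, (∑ v ∈ (W0 \ G).filter (fun v => Fld ρ v ∈ W), wt v)
      ≤ ((m : ℝ) - 1) * S0 := by
    calc ∑ ρ ∈ Bad, (∑ v ∈ (W0 \ G).filter (fun v => Fld ρ v ∈ W), wt v)
        = ∑ ρ ∈ Bad, ∑ v ∈ W0 \ G, if Fld ρ v ∈ W then wt v else 0 :=
          Finset.sum_congr rfl fun ρ _ => Finset.sum_filter _ _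
      _ = ∑ v ∈ W0 \ G, ∑ ρ ∈ Bad, if Fld ρ v ∈ W then wt v else 0 := Finset.sum_comm
      _ = ∑ v ∈ W0 \ G, ((Bad.filter (fun ρ => Fld ρ v ∈ W)).card : ℝ) * wt v := by
          refine Finset.sum_congr rfl fun v _ => ?_
          rw [← Finset.sum_filter, Finset.sum_const, nsmul_eq_mul]
      _ ≤ ∑ v ∈ W0 \ G, ((m : ℝ) - 1) * wt v := by
          refine Finset.sum_le_sum fun v hv => ?_
          refine mul_le_mul_of_nonneg_right ?_ (hwtnn v)
          rw [Finset.mem_sdiff] at hv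
          have hnall : ¬ (∀ i, f (φ i v) ∈ W) := by
            intro hall
            exact hv.2 (Finset.mem_filter.2 ⟨hv.1, hall⟩)
          push_neg at hnall
          obtain ⟨i₀, hi₀mem⟩ := hnall
          have hcurve := curve_card_le W (fun i => f (φ i v)) i₀ hi₀mem
          have hsub : Bad.filter (fun ρ => Fld ρ v ∈ W)
              ⊆ Finset.univ.filter
                (fun ρ : F => (∑ i : Fin m, ρ ^ (i : ℕ) • f (φ i v)) ∈ W) := by
            intro ρ hρ
            rw [Finset.mem_filter] at hρ ⊢
            exact ⟨Finset.mem_univ _, hρ.2⟩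
          calc ((Bad.filter (fun ρ => Fld ρ v ∈ W)).card : ℝ)
              ≤ ((Finset.univ.filter
                  (fun ρ : F => (∑ i : Fin m, ρ ^ (i : ℕ) • f (φ i v)) ∈ W)).card : ℝ) := by
                exact_mod_cast Finset.card_le_card hsub
            _ ≤ ((m - 1 : ℕ) : ℝ) := by exact_mod_cast hcurve
            _ = (m : ℝ) - 1 := hm1cast
      _ = ((m : ℝ) - 1) * ∑ v ∈ W0 \ G, wt v := by rw [Finset.mul_sum]
      _ ≤ ((m : ℝ) - 1) * S0 := by
          refine mul_le_mul_of_nonneg_left ?_ (by linarith)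
          exact Finset.sum_le_sum_of_subset_of_nonneg hWGsub (fun v _ _ => hwtnn v)
  have hlower : (Bad.card : ℝ) * (ε * S0)
      < ∑ ρ ∈ Bad, (∑ v ∈ (W0 \ G).filter (fun v => Fld ρ v ∈ W), wt v) := by
    calc (Bad.card : ℝ) * (ε * S0) = ∑ _ρ ∈ Bad, ε * S0 := by
          rw [Finset.sum_const, nsmul_eq_mul]
      _ < _ := Finset.sum_lt_sum_of_nonempty hBne hperρ
  have hfinal : (Bad.card : ℝ) * ε * S0 < ((m : ℝ) - 1) * S0 := by nlinarith
  exact le_of_lt (lt_of_mul_lt_mul_right hfinal hS0.le)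
end

section
/- Let F be a finite field, 1 ≤ k ≤ n ≤ |F|, δ := (n − k + 1)/n, and let Γ = (V,E) be an n-RIM that is a λ̃-expander for some λ̃ ≥ 0. Then every nonzero edge-consistent codeword f ∈ C(Γ,k) satisfies |{v ∈ V : f(v,·) ≠ 0}| ≥ (δ − λ̃)·|V|. -/
open Matrix Polynomial
open scoped Classical

set_option maxHeartbeats 1000000 in
/-- In an `n`-RIM that is a `λ̃`-expander, every nonzero edge-consistent codeword of the
graph code with base code `RS[n,k]` is nonzero on at least `(δ - λ̃)·|V|` vertices,
where `δ = (n - k + 1)/n`. -/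
theorem expander_code_nonzero_vertices
    (F : Type*) [Field F] [Fintype F]
    (n k : ℕ) (hk : 1 ≤ k) (hkn : k ≤ n) (hn : n ≤ Fintype.card F)
    (x : Fin n → F) (hx : Function.Injective x)
    (V : Type*) [Fintype V] [Nonempty V]
    (E : V → Fin n → V) (jbar : Equiv.Perm (Fin n))
    (hE : ∀ (v : V) (j : Fin n), E (E v j) (jbar j) = v)
    (lam : ℝ) (hlam : 0 ≤ lam)
    (A : Matrix V V ℝ)
    (hA : ∀ u v : V, A u v = (Nat.card {j : Fin n // E u j = v} : ℝ))
    (hexp : ∀ y : V → ℝ, (∑ v : V, y v) = 0 →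
      y ⬝ᵥ (A *ᵥ y) ≤ lam * n * ∑ v : V, (y v) ^ 2)
    (f : V → Fin n → F)
    (hcons : ∀ (v : V) (j : Fin n), f v j = f (E v j) (jbar j))
    (hcode : ∀ v : V, f v ∈ RScode F n k x)
    (hf0 : f ≠ 0) :
    (((n : ℝ) - k + 1) / n - lam) * Fintype.card V
      ≤ (Nat.card {v : V | f v ≠ 0} : ℝ) := by
  classical
  set S : Finset V := Finset.univ.filter (fun v => f v ≠ 0) with hSdef
  have hNat : Nat.card {v : V | f v ≠ 0} = S.card := by
    rw [Nat.card_coe_set_eq, Set.ncard_eq_toFinset_card', Set.toFinset_setOf]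
  -- basic positivity
  have hn1 : 1 ≤ n := le_trans hk hkn
  have hs1 : 1 ≤ S.card := by
    obtain ⟨v, hv⟩ : ∃ v, f v ≠ 0 := by
      by_contra h
      push_neg at h
      exact hf0 (funext fun v => h v)
    exact Finset.card_pos.mpr ⟨v, by simp [hSdef, hv]⟩
  have hN1 : 1 ≤ Fintype.card V := Fintype.card_pos
  -- bijectivity of each edge map
  have hbij : ∀ j : Fin n, Function.Bijective (fun u => E u j) := by
    intro j
    have hinj : Function.Injective (fun u => E u j) := by
      intro a b hab
      have ha := hE a j
      have hb := hE b j
      simp only at hab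
      rw [hab] at ha
      rw [hb] at ha
      exact ha.symm
    exact Finite.injective_iff_bijective.mp hinj
  -- A as filter card
  have hA' : ∀ u v, A u v = ((Finset.univ.filter fun j => E u j = v).card : ℝ) := by
    intro u v
    rw [hA]
    congr 1
    rw [Nat.card_eq_fintype_card]
    exact Fintype.card_subtype _
  -- row sums
  have hrow : ∀ u, ∑ v, A u v = (n : ℝ) := by
    intro u
    simp only [hA']
    rw [← Nat.cast_sum]
    norm_cast
    rw [← Finset.card_eq_sum_card_fiberwise (fun j _ => Finset.mem_univ (E u j))]
    simp
  -- column sums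
  have hcol : ∀ v, ∑ u, A u v = (n : ℝ) := by
    intro v
    simp only [hA', Finset.card_filter]
    push_cast
    rw [Finset.sum_comm]
    have : ∀ j : Fin n, (∑ u : V, if E u j = v then (1:ℝ) else 0) = 1 := by
      intro j
      rw [Fintype.sum_bijective (fun u => E u j) (hbij j)
        (fun u => if E u j = v then (1:ℝ) else 0) (fun w => if w = v then (1:ℝ) else 0)
        (fun u => rfl)]
      simp
    simp [this]
  -- partial row sums over S
  have hrowS : ∀ u, ∑ v ∈ S, A u v
      = ((Finset.univ.filter fun j => E u j ∈ S).card : ℝ) := by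
    intro u
    simp only [hA', Finset.card_filter]
    push_cast
    rw [Finset.sum_comm]
    congr 1
    ext j
    by_cases h : E u j ∈ S
    · rw [Finset.sum_eq_single (E u j)]
      · simp [h]
      · intro b _ hb
        simp [Ne.symm hb]
      · intro hb
        exact absurd h hb
    · rw [Finset.sum_eq_zero]
      · simp [h]
      · intro b hb
        have : ¬ (E u j = b) := fun hh => h (hh ▸ hb)
        simp [this]
  -- per-vertex lower bound on nonzero coordinates
  have hlow : ∀ u ∈ S, ((n : ℝ) - k + 1) ≤ ∑ v ∈ S, A u v := by
    intro u hu
    have hu' : f u ≠ 0 := by simpa [hSdef] using hu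
    obtain ⟨P, hPd, hPe⟩ := hcode u
    have hP0 : P ≠ 0 := by
      intro h
      apply hu'
      funext j
      simp [hPe j, h]
    have hdeg : P.natDegree ≤ k - 1 := by
      have h1 : P.natDegree < k := (Polynomial.natDegree_lt_iff_degree_lt hP0).mpr hPd
      omega
    -- zero set is small
    have hZ : (Finset.univ.filter fun j => f u j = 0).card ≤ k - 1 := by
      set Z := Finset.univ.filter fun j => f u j = 0 with hZdef
      have himg : (Z.image x).card = Z.card := Finset.card_image_of_injective _ hx
      have hsub : Z.image x ⊆ P.roots.toFinset := by
        intro a ha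
        rw [Finset.mem_image] at ha
        obtain ⟨j, hj, rfl⟩ := ha
        rw [Multiset.mem_toFinset, Polynomial.mem_roots hP0]
        have : f u j = 0 := by simpa [hZdef] using hj
        rw [hPe j] at this
        exact this
      calc Z.card = (Z.image x).card := himg.symm
        _ ≤ P.roots.toFinset.card := Finset.card_le_card hsub
        _ ≤ Multiset.card P.roots := Multiset.toFinset_card_le _
        _ ≤ P.natDegree := Polynomial.card_roots' P
        _ ≤ k - 1 := hdeg
    -- nonzero coordinates go into S
    have hsubS : (Finset.univ.filter fun j => f u j ≠ 0)
        ⊆ (Finset.univ.filter fun j => E u j ∈ S) := by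
      intro j hj
      rw [Finset.mem_filter] at hj ⊢
      refine ⟨Finset.mem_univ _, ?_⟩
      rw [hSdef, Finset.mem_filter]
      refine ⟨Finset.mem_univ _, ?_⟩
      intro h0
      apply hj.2
      rw [hcons u j, h0]
      rfl
    have hcount : n - (k-1) ≤ (Finset.univ.filter fun j => E u j ∈ S).card := by
      have hsplit := Finset.card_filter_add_card_filter_not
        (s := (Finset.univ : Finset (Fin n))) (p := fun j => f u j = 0)
      simp only [Finset.card_univ, Fintype.card_fin] at hsplit
      have := Finset.card_le_card hsubS
      have hne : (Finset.univ.filter fun j => ¬ f u j = 0).card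
          = (Finset.univ.filter fun j => f u j ≠ 0).card := rfl
      omega
    rw [hrowS u]
    have : ((n - (k-1) : ℕ) : ℝ) ≤ ((Finset.univ.filter fun j => E u j ∈ S).card : ℝ) := by
      exact_mod_cast hcount
    have hcast : ((n - (k-1) : ℕ) : ℝ) = (n : ℝ) - k + 1 := by
      have : k - 1 ≤ n := by omega
      push_cast [Nat.cast_sub this]
      have h1 : ((k - 1 : ℕ) : ℝ) = (k : ℝ) - 1 := by
        push_cast [Nat.cast_sub hk]
        ring
      rw [h1]
      ring
    linarith [hcast ▸ this]
  -- total edge count within S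
  have hESS : ((n : ℝ) - k + 1) * S.card ≤ ∑ u ∈ S, ∑ v ∈ S, A u v := by
    calc ((n : ℝ) - k + 1) * S.card = ∑ _u ∈ S, ((n : ℝ) - k + 1) := by
          rw [Finset.sum_const, nsmul_eq_mul]; ring
      _ ≤ ∑ u ∈ S, ∑ v ∈ S, A u v := Finset.sum_le_sum hlow
  -- the test vector
  set N : ℝ := (Fintype.card V : ℝ) with hNdef
  set c : ℝ := (S.card : ℝ) / N with hcdef
  have hN0 : (0:ℝ) < N := by
    rw [hNdef]; exact_mod_cast hN1
  set y : V → ℝ := fun v => (if v ∈ S then (1:ℝ) else 0) - c with hydef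
  have hchi : ∑ v : V, (if v ∈ S then (1:ℝ) else 0) = (S.card : ℝ) := by
    simp [Finset.sum_ite_mem]
  have hysum : ∑ v : V, y v = 0 := by
    simp only [hydef, Finset.sum_sub_distrib, hchi, Finset.sum_const, Finset.card_univ,
      nsmul_eq_mul]
    rw [hcdef, hNdef]
    field_simp
    ring
  have hysq : ∑ v : V, (y v) ^ 2 = (S.card : ℝ) - (S.card : ℝ) * c := by
    have : ∀ v : V, (y v)^2 = (if v ∈ S then (1:ℝ) else 0) - 2*c*(if v ∈ S then (1:ℝ) else 0) + c^2 := by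
      intro v
      rw [hydef]
      by_cases h : v ∈ S <;> simp [h] <;> ring
    rw [Finset.sum_congr rfl (fun v _ => this v)]
    simp only [Finset.sum_add_distrib, Finset.sum_sub_distrib, hchi, ← Finset.mul_sum,
      Finset.sum_const, Finset.card_univ, nsmul_eq_mul]
    have hc2 : (Fintype.card V : ℝ) * c^2 = (S.card : ℝ) * c := by
      rw [hcdef, hNdef]
      field_simp
    rw [hc2]
    ring
  -- compute the quadratic form
  have hmulvec : ∀ u, (A *ᵥ y) u = (∑ v ∈ S, A u v) - c * n := by
    intro u
    simp only [Matrix.mulVec, dotProduct, hydef]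
    have : ∀ v : V, A u v * ((if v ∈ S then (1:ℝ) else 0) - c)
        = (if v ∈ S then A u v else 0) - c * A u v := by
      intro v
      by_cases h : v ∈ S <;> simp [h] <;> ring
    rw [Finset.sum_congr rfl (fun v _ => this v)]
    rw [Finset.sum_sub_distrib, ← Finset.mul_sum, hrow u, Finset.sum_ite_mem,
      Finset.univ_inter]
  have hcolS : ∑ u : V, ∑ v ∈ S, A u v = (n : ℝ) * S.card := by
    rw [show (∑ u : V, ∑ v ∈ S, A u v) = ∑ v ∈ S, ∑ u : V, A u v from Finset.sum_comm]
    rw [Finset.sum_congr rfl (fun v _ => hcol v)]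
    rw [Finset.sum_const, nsmul_eq_mul]
    ring
  have hquad : y ⬝ᵥ (A *ᵥ y) = (∑ u ∈ S, ∑ v ∈ S, A u v) - c * ((n:ℝ) * S.card) := by
    simp only [dotProduct]
    rw [Finset.sum_congr rfl (fun u _ => by rw [hmulvec u])]
    have hexpand : ∀ u : V, y u * ((∑ v ∈ S, A u v) - c * n)
        = y u * (∑ v ∈ S, A u v) - (c * n) * y u := by
      intro u; ring
    rw [Finset.sum_congr rfl (fun u _ => hexpand u), Finset.sum_sub_distrib,
      ← Finset.mul_sum, hysum, mul_zero, sub_zero]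
    have hyrow : ∀ u : V, y u * (∑ v ∈ S, A u v)
        = (if u ∈ S then (∑ v ∈ S, A u v) else 0) - c * (∑ v ∈ S, A u v) := by
      intro u
      rw [hydef]
      by_cases h : u ∈ S <;> simp [h] <;> ring
    rw [Finset.sum_congr rfl (fun u _ => hyrow u), Finset.sum_sub_distrib,
      ← Finset.mul_sum, hcolS, Finset.sum_ite_mem, Finset.univ_inter]
  -- apply expansion
  have hkey : (∑ u ∈ S, ∑ v ∈ S, A u v) - c * ((n:ℝ) * S.card)
      ≤ lam * n * ((S.card : ℝ) - (S.card : ℝ) * c) := by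
    rw [← hquad, ← hysq]
    exact hexp y hysum
  -- assemble
  have hsR : (1:ℝ) ≤ (S.card : ℝ) := by exact_mod_cast hs1
  have hnR : (1:ℝ) ≤ (n : ℝ) := by exact_mod_cast hn1
  have hcge : 0 ≤ c := by
    rw [hcdef]; positivity
  have hmain : ((n : ℝ) - k + 1) * S.card ≤ lam * n * S.card + c * (n * S.card) := by
    have h1 : lam * n * ((S.card : ℝ) - (S.card : ℝ) * c) ≤ lam * n * S.card := by
      have : (S.card : ℝ) - (S.card : ℝ) * c ≤ S.card := by nlinarith
      have hln : 0 ≤ lam * n := by positivity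
      nlinarith
    linarith [hESS, hkey]
  -- final algebra
  rw [hNat]
  push_cast
  have hgoal : ((n : ℝ) - k + 1) / n - lam ≤ c := by
    rw [div_sub' (by linarith : (n:ℝ) ≠ 0), div_le_iff₀ (by linarith : (0:ℝ) < n)]
    have hs0 : (0:ℝ) < S.card := by linarith
    nlinarith [hmain]
  calc (((n : ℝ) - k + 1) / n - lam) * N ≤ c * N := by nlinarith
    _ = (S.card : ℝ) := by
        rw [hcdef]; field_simp
end

section
/- (Bound on minimum distance.) Let F be a finite field, 1 ≤ k ≤ n ≤ |F|, δ := (n − k + 1)/n, and let Γ = (V,E) be an n-RIM with no petal indices (E(v,j) ≠ v for all (v,j)) that is a λ̃-expander for some λ̃ ≥ 0. Then for any two distinct codewords f ≠ f' in C(Γ,k), the relative Hamming distance over the edge set satisfies Δ_H(f,f') ≥ δ·(δ − λ̃). (Since Γ has no petals, |E(Γ)| = n|V|/2.) -/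
open Matrix Polynomial
open scoped Classical

lemma RS_dist {F : Type*} [Field F] {n k : ℕ} (hk : 1 ≤ k) (hkn : k ≤ n)
    {x : Fin n → F} (hx : Function.Injective x) {c c' : Fin n → F}
    (hc : c ∈ RScode F n k x) (hc' : c' ∈ RScode F n k x) (hne : c ≠ c') :
    n + 1 - k ≤ (Finset.univ.filter fun j => c j ≠ c' j).card := by
  obtain ⟨P, hP, hPe⟩ := hc
  obtain ⟨P', hP', hPe'⟩ := hc'
  set Q := P - P' with hQ
  have hQne : Q ≠ 0 := by
    intro h
    apply hne
    have hPP : P = P' := sub_eq_zero.mp (hQ ▸ h)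
    funext j
    rw [hPe, hPe', hPP]
  have hQdeg : Q.degree < (k : WithBot ℕ) :=
    lt_of_le_of_lt (Polynomial.degree_sub_le _ _) (max_lt hP hP')
  have hQnat : Q.natDegree ≤ k - 1 := by
    have := (Polynomial.natDegree_lt_iff_degree_lt hQne).mpr hQdeg
    omega
  have hzero : (Finset.univ.filter fun j => c j = c' j).card ≤ k - 1 := by
    have hinj : Set.InjOn x ((Finset.univ.filter fun j => c j = c' j) : Finset (Fin n)) :=
      fun a _ b _ h => hx h
    have hmaps : ∀ j ∈ (Finset.univ.filter fun j => c j = c' j),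
        x j ∈ Q.roots.toFinset := by
      intro j hj
      simp only [Finset.mem_filter] at hj
      rw [Multiset.mem_toFinset, Polynomial.mem_roots hQne, Polynomial.IsRoot.def, hQ,
        Polynomial.eval_sub, sub_eq_zero, ← hPe, ← hPe']
      exact hj.2
    calc (Finset.univ.filter fun j => c j = c' j).card
        ≤ Q.roots.toFinset.card := Finset.card_le_card_of_injOn x hmaps hinj
      _ ≤ Multiset.card Q.roots := Q.roots.toFinset_card_le
      _ ≤ Q.natDegree := Polynomial.card_roots' Q
      _ ≤ k - 1 := hQnat
  have htot := Finset.card_filter_add_card_filter_not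
    (s := (Finset.univ : Finset (Fin n))) (p := fun j => c j = c' j)
  simp only [Finset.card_univ, Fintype.card_fin] at htot
  simp only [ne_eq]
  omega

lemma card_two_mul_image {α : Type*} [Fintype α] [DecidableEq α]
    (σ : α → α) (hσ : Function.Involutive σ) (hfix : ∀ a, σ a ≠ a)
    (s : Setoid α) (hs : ∀ p q, s.r p q ↔ p = q ∨ q = σ p)
    (D : Finset α) (hD : ∀ p ∈ D, σ p ∈ D) :
    D.card = 2 * (D.image (Quotient.mk s)).card := by
  rw [Finset.card_eq_sum_card_image (Quotient.mk s) D]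
  rw [Finset.sum_congr rfl (g := fun _ => 2), Finset.sum_const, smul_eq_mul, mul_comm]
  intro b hb
  obtain ⟨p, hpD, hpb⟩ := Finset.mem_image.mp hb
  have hfil : D.filter (fun q => Quotient.mk s q = b) = {p, σ p} := by
    ext q
    simp only [Finset.mem_filter, Finset.mem_insert, Finset.mem_singleton]
    constructor
    · rintro ⟨hqD, hqb⟩
      have : s.r q p := Quotient.eq.mp (hqb.trans hpb.symm)
      rcases (hs q p).mp this with h | h
      · exact Or.inl h
      · right; rw [h, hσ]
    · rintro (rfl | rfl)
      · exact ⟨hpD, hpb⟩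
      · refine ⟨hD p hpD, ?_⟩
        rw [← hpb]
        exact Quotient.sound (Setoid.symm ((hs p (σ p)).mpr (Or.inr rfl)))
  rw [hfil, Finset.card_insert_of_notMem (by simp [(hfix p).symm, Ne, eq_comm]),
    Finset.card_singleton]

lemma sum_indicator_mul {V : Type*} [Fintype V] (S : Finset V) (g : V → ℝ) :
    ∑ v, (if v ∈ S then (1:ℝ) else 0) * g v = ∑ v ∈ S, g v := by
  simp [ite_mul, Finset.sum_ite_mem]

lemma sum_mul_indicator {V : Type*} [Fintype V] (S : Finset V) (g : V → ℝ) :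
    ∑ v, g v * (if v ∈ S then (1:ℝ) else 0) = ∑ v ∈ S, g v := by
  simp [mul_ite, Finset.sum_ite_mem]

set_option maxHeartbeats 1000000 in
/-- **Bound on the minimum distance of a graph code on an expander.** If the `n`-RIM
`Γ` has no petals and is a `λ̃`-expander, then any two distinct codewords of `C(Γ,k)`
are at relative Hamming distance (over the edge set, the quotient of `V × Fin n`
identifying `(v,j)` with `(E(v,j), j̄)`) at least `δ(δ - λ̃)`, with `δ = (n-k+1)/n`. -/
theorem expander_code_min_distance
    (F : Type*) [Field F] [Fintype F]
    (n k : ℕ) (hk : 1 ≤ k) (hkn : k ≤ n) (hn : n ≤ Fintype.card F)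
    (x : Fin n → F) (hx : Function.Injective x)
    (V : Type*) [Fintype V] [Nonempty V]
    (E : V → Fin n → V) (jbar : Equiv.Perm (Fin n))
    (hE : ∀ (v : V) (j : Fin n), E (E v j) (jbar j) = v)
    (hnopetal : ∀ (v : V) (j : Fin n), E v j ≠ v)
    (lam : ℝ) (hlam : 0 ≤ lam)
    (A : Matrix V V ℝ)
    (hA : ∀ u v : V, A u v = (Nat.card {j : Fin n // E u j = v} : ℝ))
    (hexp : ∀ y : V → ℝ, (∑ v : V, y v) = 0 →
      y ⬝ᵥ (A *ᵥ y) ≤ lam * n * ∑ v : V, (y v) ^ 2)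
    -- the edge set of `Γ` is the quotient of `V × Fin n` by the setoid `sE`
    -- identifying `(v, j)` with `(E v j, j̄)`
    (sE : Setoid (V × Fin n))
    (hsE : ∀ p q : V × Fin n, sE.r p q ↔ (p = q ∨ q = (E p.1 p.2, jbar p.2)))
    (f f' : V → Fin n → F)
    (hcons : ∀ (v : V) (j : Fin n), f v j = f (E v j) (jbar j))
    (hcons' : ∀ (v : V) (j : Fin n), f' v j = f' (E v j) (jbar j))
    (hcode : ∀ v : V, f v ∈ RScode F n k x)
    (hcode' : ∀ v : V, f' v ∈ RScode F n k x)
    (hne : f ≠ f') :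
    (((n : ℝ) - k + 1) / n) * (((n : ℝ) - k + 1) / n - lam)
      ≤ (Nat.card {e : Quotient sE |
            ∃ p : V × Fin n, Quotient.mk sE p = e ∧ f p.1 p.2 ≠ f' p.1 p.2} : ℝ)
          / (Nat.card (Quotient sE) : ℝ) := by
  -- the edge involution
  set σp : V × Fin n → V × Fin n := fun p => (E p.1 p.2, jbar p.2) with hσp
  have hσfix : ∀ p, σp p ≠ p := by
    intro p h
    exact hnopetal p.1 p.2 (congrArg Prod.fst h)
  have hσ : Function.Involutive σp := by
    intro p
    have r1 : sE.r p (σp p) := (hsE p (σp p)).mpr (Or.inr rfl)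
    have r2 : sE.r (σp p) p := Setoid.symm r1
    rcases (hsE (σp p) p).mp r2 with h | h
    · exact absurd h (hσfix p)
    · exact h.symm
  have hjj : ∀ j, jbar (jbar j) = j := by
    intro j
    exact congrArg Prod.snd (hσ (Classical.arbitrary V, j))
  -- vertex and pair sets of disagreement
  set S : Finset V := Finset.univ.filter (fun v => f v ≠ f' v) with hS
  set D : Finset (V × Fin n) :=
    Finset.univ.filter (fun p => f p.1 p.2 ≠ f' p.1 p.2) with hD
  have hDσ : ∀ p ∈ D, σp p ∈ D := by
    intro p hp
    simp only [hD, Finset.mem_filter, Finset.mem_univ, true_and] at hp ⊢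
    intro h
    exact hp (by rw [hcons p.1 p.2, hcons' p.1 p.2]; exact h)
  have hSne : S.Nonempty := by
    obtain ⟨v, hv⟩ := Function.ne_iff.mp hne
    exact ⟨v, by simp [hS, hv]⟩
  -- cardinalities
  have hDcard : D.card = 2 * (D.image (Quotient.mk sE)).card :=
    card_two_mul_image σp hσ hσfix sE hsE D hDσ
  have hQcard : Fintype.card V * n = 2 * Fintype.card (Quotient sE) := by
    have h1 : (Finset.univ : Finset (V × Fin n)).card
        = 2 * ((Finset.univ : Finset (V × Fin n)).image (Quotient.mk sE)).card :=
      card_two_mul_image σp hσ hσfix sE hsE _ (fun p _ => Finset.mem_univ _)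
    have h2 : (Finset.univ : Finset (V × Fin n)).image (Quotient.mk sE) = Finset.univ := by
      apply Finset.image_univ_of_surjective
      exact fun q => ⟨q.out, Quotient.out_eq q⟩
    rw [h2, Finset.card_univ, Finset.card_univ, Fintype.card_prod, Fintype.card_fin] at h1
    exact h1
  have hBcard : Nat.card {e : Quotient sE |
        ∃ p : V × Fin n, Quotient.mk sE p = e ∧ f p.1 p.2 ≠ f' p.1 p.2}
      = (D.image (Quotient.mk sE)).card := by
    rw [Nat.card_coe_set_eq]
    have hset : {e : Quotient sE |
          ∃ p : V × Fin n, Quotient.mk sE p = e ∧ f p.1 p.2 ≠ f' p.1 p.2}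
        = ↑(D.image (Quotient.mk sE)) := by
      ext e
      simp only [Set.mem_setOf_eq, Finset.coe_image, Set.mem_image, Finset.mem_coe, hD,
        Finset.mem_filter, Finset.mem_univ, true_and]
      constructor
      · rintro ⟨p, hp1, hp2⟩; exact ⟨p, hp2, hp1⟩
      · rintro ⟨p, hp1, hp2⟩; exact ⟨p, hp2, hp1⟩
    rw [hset, Set.ncard_coe_finset]
  -- weight bound per vertex
  have hwt : ∀ v ∈ S, n + 1 - k ≤ (Finset.univ.filter fun j => f v j ≠ f' v j).card := by
    intro v hv
    apply RS_dist hk hkn hx (hcode v) (hcode' v)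
    simpa [hS] using hv
  have hDsum : D.card = ∑ v : V, (Finset.univ.filter fun j => f v j ≠ f' v j).card := by
    rw [hD, Finset.card_filter, Fintype.sum_prod_type]
    simp_rw [← Finset.card_filter]
  have hDge : (n + 1 - k) * S.card ≤ D.card := by
    calc (n + 1 - k) * S.card = ∑ _v ∈ S, (n + 1 - k) := by
          rw [Finset.sum_const, smul_eq_mul, mul_comm]
      _ ≤ ∑ v ∈ S, (Finset.univ.filter fun j => f v j ≠ f' v j).card :=
          Finset.sum_le_sum hwt
      _ ≤ ∑ v : V, (Finset.univ.filter fun j => f v j ≠ f' v j).card :=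
          Finset.sum_le_sum_of_subset (Finset.subset_univ S)
      _ = D.card := hDsum.symm
  -- matrix entries as cardinalities
  have hA' : ∀ u v : V, A u v = ((Finset.univ.filter fun j => E u j = v).card : ℝ) := by
    intro u v
    rw [hA, Nat.card_eq_fintype_card, Fintype.card_subtype]
  have hrow : ∀ u : V, ∑ v : V, A u v = (n : ℝ) := by
    intro u
    simp_rw [hA']
    rw [← Nat.cast_sum]
    have h := Finset.card_eq_sum_card_fiberwise
      (f := fun j => E u j) (s := (Finset.univ : Finset (Fin n)))
      (t := (Finset.univ : Finset V)) (fun j _ => Finset.mem_univ _)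
    rw [Finset.card_univ, Fintype.card_fin] at h
    rw [← h]
  have hAsymm : ∀ u v : V, A u v = A v u := by
    intro u v
    rw [hA', hA']
    congr 1
    apply Finset.card_bij' (fun j _ => jbar j) (fun j _ => jbar j)
    · intro j hj
      simp only [Finset.mem_filter, Finset.mem_univ, true_and] at hj ⊢
      rw [← hj, hE]
    · intro j hj
      simp only [Finset.mem_filter, Finset.mem_univ, true_and] at hj ⊢
      rw [← hj, hE]
    · intro j _; exact hjj j
    · intro j _; exact hjj j
  have hcol : ∀ v : V, ∑ u : V, A u v = (n : ℝ) := by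
    intro v
    calc ∑ u : V, A u v = ∑ u : V, A v u := by simp_rw [hAsymm]
      _ = (n : ℝ) := hrow v
  -- setup reals
  set N := Fintype.card V with hN
  have hN1 : 1 ≤ N := Fintype.card_pos
  set sR : ℝ := (S.card : ℝ) with hsRdef
  set NR : ℝ := (N : ℝ) with hNRdef
  have hsR1 : (1 : ℝ) ≤ sR := by
    rw [hsRdef]; exact_mod_cast Finset.card_pos.mpr hSne
  have hNR1 : (1 : ℝ) ≤ NR := by rw [hNRdef]; exact_mod_cast hN1
  have hsRN : sR ≤ NR := by
    rw [hsRdef, hNRdef, hN]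
    exact_mod_cast Finset.card_le_univ S
  have hNR0 : (0 : ℝ) < NR := lt_of_lt_of_le one_pos hNR1
  have hsR0 : (0 : ℝ) < sR := lt_of_lt_of_le one_pos hsR1
  have hn1 : 1 ≤ n := le_trans hk hkn
  have hnR0 : (0 : ℝ) < (n : ℝ) := by exact_mod_cast hn1
  -- the expander test function
  set y : V → ℝ := fun v => (if v ∈ S then (1 : ℝ) else 0) - sR / NR with hy
  have hchi : ∑ v : V, (if v ∈ S then (1 : ℝ) else 0) = sR := by
    rw [Finset.sum_ite_mem, Finset.univ_inter, Finset.sum_const, hsRdef]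
    simp
  have hsum0 : ∑ v : V, y v = 0 := by
    simp only [hy, Finset.sum_sub_distrib, hchi, Finset.sum_const, Finset.card_univ, ← hN,
      nsmul_eq_mul, ← hNRdef]
    field_simp
    ring
  have hy2 : ∑ v : V, (y v) ^ 2 = sR - sR ^ 2 / NR := by
    have hterm : ∀ v : V, (y v) ^ 2 = (if v ∈ S then (1 : ℝ) else 0)
        - 2 * (sR / NR) * (if v ∈ S then (1 : ℝ) else 0) + (sR / NR) ^ 2 := by
      intro v
      rw [hy]
      by_cases h : v ∈ S <;> simp [h] <;> ring
    simp_rw [hterm]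
    rw [Finset.sum_add_distrib, Finset.sum_sub_distrib, hchi, ← Finset.mul_sum, hchi,
      Finset.sum_const, Finset.card_univ, ← hN, nsmul_eq_mul, ← hNRdef]
    field_simp
    ring
  set T : ℝ := ∑ u ∈ S, ∑ v ∈ S, A u v with hT
  have hq1 : ∑ u : V, ∑ v : V, ((if u ∈ S then (1:ℝ) else 0) * A u v)
      * (if v ∈ S then (1:ℝ) else 0) = T := by
    simp_rw [sum_mul_indicator, ← Finset.mul_sum]
    rw [sum_indicator_mul, hT]
  have hq2 : ∑ u : V, ∑ v : V, (sR / NR) * (A u v * (if v ∈ S then (1:ℝ) else 0))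
      = (sR / NR) * (sR * n) := by
    simp_rw [← Finset.mul_sum]
    congr 1
    simp_rw [sum_mul_indicator]
    rw [Finset.sum_comm (f := fun u v => A u v)]
    rw [Finset.sum_congr rfl (fun v _ => hcol v), Finset.sum_const, nsmul_eq_mul, hsRdef]
  have hq3 : ∑ u : V, ∑ v : V, (sR / NR) * ((if u ∈ S then (1:ℝ) else 0) * A u v)
      = (sR / NR) * (sR * n) := by
    simp_rw [← Finset.mul_sum]
    congr 1
    simp_rw [hrow]
    rw [sum_indicator_mul, Finset.sum_const, nsmul_eq_mul, hsRdef]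
  have hq4 : ∑ u : V, ∑ v : V, (sR / NR) * (sR / NR) * A u v
      = (sR / NR) * (sR / NR) * (NR * n) := by
    simp_rw [← Finset.mul_sum, hrow]
    rw [Finset.sum_const, Finset.card_univ, ← hN, nsmul_eq_mul, ← hNRdef]
  have hdot : y ⬝ᵥ A *ᵥ y = T - (n : ℝ) * sR ^ 2 / NR := by
    have expand : y ⬝ᵥ A *ᵥ y = ∑ u : V, ∑ v : V, y u * (A u v * y v) := by
      simp [dotProduct, mulVec, Finset.mul_sum]
    have hterm : ∀ u v : V, y u * (A u v * y v) =
        ((if u ∈ S then (1:ℝ) else 0) * A u v) * (if v ∈ S then (1:ℝ) else 0)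
        - (sR / NR) * (A u v * (if v ∈ S then (1:ℝ) else 0))
        - (sR / NR) * ((if u ∈ S then (1:ℝ) else 0) * A u v)
        + (sR / NR) * (sR / NR) * A u v := by
      intro u v
      rw [hy]
      ring
    rw [expand]
    simp_rw [hterm]
    simp only [Finset.sum_sub_distrib, Finset.sum_add_distrib]
    rw [hq1, hq2, hq3, hq4]
    field_simp
    ring
  -- the expander inequality
  have hexpy := hexp y hsum0
  rw [hdot, hy2] at hexpy
  -- lower bound on T
  have hwcast : ((n + 1 - k : ℕ) : ℝ) = (n : ℝ) - k + 1 := by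
    rw [Nat.cast_sub (by omega)]
    push_cast
    ring
  have hTu : ∀ u ∈ S, ((n : ℝ) - k + 1) ≤ ∑ v ∈ S, A u v := by
    intro u hu
    have hfib : ∑ v ∈ S, A u v
        = (((Finset.univ.filter fun j => E u j ∈ S).card : ℕ) : ℝ) := by
      simp_rw [hA']
      rw [← Nat.cast_sum]
      congr 1
      symm
      rw [Finset.card_eq_sum_card_fiberwise (f := fun j => E u j)
        (s := Finset.univ.filter fun j => E u j ∈ S) (t := S)
        (fun j hj => (Finset.mem_filter.mp hj).2)]
      apply Finset.sum_congr rfl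
      intro v hv
      congr 1
      ext j
      simp only [Finset.mem_filter, Finset.mem_univ, true_and]
      exact ⟨fun h => h.2, fun h => ⟨by rw [h]; exact hv, h⟩⟩
    have hsub : (Finset.univ.filter fun j => f u j ≠ f' u j)
        ⊆ (Finset.univ.filter fun j => E u j ∈ S) := by
      intro j hj
      simp only [Finset.mem_filter, Finset.mem_univ, true_and] at hj ⊢
      rw [hS]
      simp only [Finset.mem_filter, Finset.mem_univ, true_and]
      intro hEq
      apply hj
      rw [hcons u j, hcons' u j, hEq]
    have hw := hwt u hu
    have hcard := Finset.card_le_card hsub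
    rw [hfib, ← hwcast]
    exact_mod_cast le_trans hw hcard
  have hTS : ((n : ℝ) - k + 1) * sR ≤ T := by
    calc ((n : ℝ) - k + 1) * sR = ∑ _u ∈ S, ((n : ℝ) - k + 1) := by
          rw [Finset.sum_const, nsmul_eq_mul, hsRdef]; ring
      _ ≤ ∑ u ∈ S, ∑ v ∈ S, A u v := Finset.sum_le_sum hTu
      _ = T := hT.symm
  -- the key inequality
  have hA1 : T * NR ≤ (n : ℝ) * sR ^ 2 + lam * (n : ℝ) * (sR * NR - sR ^ 2) := by
    have h := mul_le_mul_of_nonneg_right hexpy hNR0.le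
    have e1 : (T - (n : ℝ) * sR ^ 2 / NR) * NR = T * NR - (n : ℝ) * sR ^ 2 := by
      field_simp
    have e2 : lam * (n : ℝ) * (sR - sR ^ 2 / NR) * NR
        = lam * (n : ℝ) * (sR * NR - sR ^ 2) := by
      field_simp
    rw [e1, e2] at h
    linarith
  have key : ((n : ℝ) - k + 1) * NR ≤ (n : ℝ) * sR + lam * (n : ℝ) * NR := by
    have t1 : (((n : ℝ) - k + 1)) * sR * NR ≤ T * NR :=
      mul_le_mul_of_nonneg_right hTS hNR0.le
    have t4 : (((n : ℝ) - k + 1) * NR) * sR ≤ ((n : ℝ) * sR + lam * (n : ℝ) * NR) * sR := by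
      linarith only [t1, hA1, mul_nonneg (mul_nonneg hlam hnR0.le) (sq_nonneg sR)]
    exact le_of_mul_le_mul_right t4 hsR0
  have key2 : (((n : ℝ) - k + 1) - lam * n) * NR ≤ (n : ℝ) * sR := by linarith only [key]
  have hδ0 : (0 : ℝ) ≤ (n : ℝ) - k + 1 := by
    have : (k : ℝ) ≤ (n : ℝ) := Nat.cast_le.mpr hkn
    linarith
  -- translate the counting facts to ℝ
  have hQR : 2 * (Nat.card (Quotient sE) : ℝ) = NR * (n : ℝ) := by
    rw [Nat.card_eq_fintype_card, hNRdef, hN]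
    exact_mod_cast hQcard.symm
  have hQpos : (0 : ℝ) < (Nat.card (Quotient sE) : ℝ) := by
    linarith [mul_pos hNR0 hnR0, hQR]
  have hBR : 2 * ((Nat.card {e : Quotient sE |
        ∃ p : V × Fin n, Quotient.mk sE p = e ∧ f p.1 p.2 ≠ f' p.1 p.2} : ℕ) : ℝ)
      = ((D.card : ℕ) : ℝ) := by
    rw [hBcard]
    exact_mod_cast hDcard.symm
  have hBnn : (0 : ℝ) ≤ ((Nat.card {e : Quotient sE |
        ∃ p : V × Fin n, Quotient.mk sE p = e ∧ f p.1 p.2 ≠ f' p.1 p.2} : ℕ) : ℝ) :=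
    Nat.cast_nonneg _
  have hDge' : ((n : ℝ) - k + 1) * sR ≤ ((D.card : ℕ) : ℝ) := by
    rw [← hwcast, hsRdef]
    exact_mod_cast hDge
  -- final arithmetic
  set BR : ℝ := ((Nat.card {e : Quotient sE |
        ∃ p : V × Fin n, Quotient.mk sE p = e ∧ f p.1 p.2 ≠ f' p.1 p.2} : ℕ) : ℝ) with hBRdef
  set QR : ℝ := ((Nat.card (Quotient sE) : ℕ) : ℝ) with hQRdef
  rw [show (((n : ℝ) - k + 1) / n) * (((n : ℝ) - k + 1) / n - lam)
      = (((n : ℝ) - k + 1) * (((n : ℝ) - k + 1) - lam * n)) / ((n : ℝ) * n) by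
    have hne' : (n : ℝ) ≠ 0 := hnR0.ne'
    field_simp]
  rw [div_le_div_iff₀ (by positivity) hQpos]
  have hfin : ((n:ℝ) - k + 1) * (((n:ℝ) - k + 1) - lam * n) * QR * (2 * NR)
      ≤ BR * ((n:ℝ) * n) * (2 * NR) := by
    calc ((n:ℝ) - k + 1) * (((n:ℝ) - k + 1) - lam * n) * QR * (2 * NR)
        = ((n:ℝ) - k + 1) * ((((n:ℝ) - k + 1) - lam * n) * NR) * (2 * QR) := by ring
      _ = ((n:ℝ) - k + 1) * ((((n:ℝ) - k + 1) - lam * n) * NR) * (NR * n) := by rw [hQR]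
      _ ≤ ((n:ℝ) - k + 1) * ((n : ℝ) * sR) * (NR * n) :=
          mul_le_mul_of_nonneg_right (mul_le_mul_of_nonneg_left key2 hδ0)
            (by positivity)
      _ = (((n:ℝ) - k + 1) * sR) * ((n:ℝ) * (NR * n)) := by ring
      _ ≤ ((D.card : ℕ) : ℝ) * ((n:ℝ) * (NR * n)) :=
          mul_le_mul_of_nonneg_right hDge' (by positivity)
      _ = (2 * BR) * ((n:ℝ) * (NR * n)) := by rw [hBR]
      _ = BR * ((n:ℝ) * n) * (2 * NR) := by ring
  exact le_of_mul_le_mul_right hfin (by positivity)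
end

section
/- (Bound on the diameter.) Let Γ be a connected n-regular simple graph on a finite vertex set V with |V| ≥ 2, with adjacency matrix A, and let λ̃ ∈ [0,1) be such that for every x : V → ℝ with ∑_v x_v = 0 one has xᵀ A x ≤ λ̃ · n · ∑_v x_v². Then the diameter of Γ satisfies diam(Γ) ≤ 2·log(|V|/2)/log((3 − λ̃)/2) + 3. -/
/-!
Testing the expansion inequality on `x = 1_S - (|S|/|V|) • 1`, and writing the adjacency form
of an `n`-regular graph as `n ‖x‖² - xᵀ L x` with `L` the Laplacian, shows that at least
`(1 - λ̃) n |S| (1 - |S|/|V|)` edges leave any vertex set `S`. For a ball of radius `k` these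
edges end in the sphere of radius `k + 1`, each of whose vertices receives at most `n` of them;
so a ball with at most half of the vertices grows by the factor `q = (3 - λ̃)/2` at the next
radius. Hence every ball of radius `K = ⌊log (|V|/2) / log q⌋ + 1` contains more than half of the
vertices, any two of them meet, and the diameter is at most `2K`.
-/

open Finset Matrix

theorem lt_or_pow_le_of_mul_le_succ {b : ℕ → ℝ} {M q : ℝ} (hq : 0 ≤ q) (hb : Monotone b)
    (h0 : 1 ≤ b 0) (hstep : ∀ k, b k ≤ M → q * b k ≤ b (k + 1)) (k : ℕ) :
    M < b k ∨ q ^ k ≤ b k := by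
  induction k with
  | zero => simpa using Or.inr h0
  | succ k ih =>
    by_cases hk : M < b k
    · exact Or.inl (hk.trans_le (hb k.le_succ))
    · rcases ih with h | h
      · exact absurd h hk
      · right
        calc q ^ (k + 1) = q * q ^ k := pow_succ' q k
          _ ≤ q * b k := mul_le_mul_of_nonneg_left h hq
          _ ≤ b (k + 1) := hstep k (not_lt.1 hk)

theorem lt_pow_natFloor_log_div_log_add_one {M q : ℝ} (hq : 1 < q) :
    M < q ^ (⌊Real.log M / Real.log q⌋₊ + 1) := by
  refine Real.lt_pow_of_log_lt (by linarith) ?_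
  rw [← div_lt_iff₀ (Real.log_pos hq)]
  exact_mod_cast Nat.lt_floor_add_one _

namespace SimpleGraph

section closedBall

variable {V : Type*} [Fintype V] {G : SimpleGraph V}

variable (G) in
noncomputable def closedBall (u : V) (k : ℕ) : Finset V := {v | G.dist u v ≤ k}

@[simp]
theorem mem_closedBall {u v : V} {k : ℕ} : v ∈ G.closedBall u k ↔ G.dist u v ≤ k := by
  simp [closedBall]

theorem self_mem_closedBall (u : V) (k : ℕ) : u ∈ G.closedBall u k := by simp

theorem closedBall_subset_closedBall_succ (u : V) (k : ℕ) :
    G.closedBall u k ⊆ G.closedBall u (k + 1) := fun v hv ↦ by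
  simp only [mem_closedBall] at hv ⊢
  omega

theorem Connected.mem_closedBall_succ_of_adj (hconn : G.Connected) {u v w : V} {k : ℕ}
    (hv : v ∈ G.closedBall u k) (hadj : G.Adj v w) : w ∈ G.closedBall u (k + 1) := by
  rw [mem_closedBall] at hv ⊢
  have := hconn.dist_triangle (u := u) (v := v) (w := w)
  rw [dist_eq_one_iff_adj.2 hadj] at this
  omega

theorem Connected.diam_le_of_lt_two_mul_card_closedBall [DecidableEq V] (hconn : G.Connected)
    {K : ℕ} (hK : ∀ u, Fintype.card V < 2 * #(G.closedBall u K)) : G.diam ≤ 2 * K := by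
  have := hconn.nonempty
  obtain ⟨u, v, huv⟩ := G.exists_dist_eq_diam
  have hcard : #(univ : Finset V) < #(G.closedBall u K) + #(G.closedBall v K) := by
    have := hK u
    have := hK v
    rw [card_univ]
    omega
  obtain ⟨w, hw⟩ :=
    inter_nonempty_of_card_lt_card_add_card (subset_univ _) (subset_univ _) hcard
  rw [mem_inter, mem_closedBall, mem_closedBall, G.dist_comm (u := v)] at hw
  have := hconn.dist_triangle (u := u) (v := w) (w := v)
  omega

end closedBall

variable {V : Type*} {G : SimpleGraph V} [DecidableRel G.Adj]

variable (G) in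
theorem card_interedges_eq_sum_card_filter (s t : Finset V) :
    #(G.interedges s t) = ∑ v ∈ s, #{w ∈ t | G.Adj v w} := by
  simp only [interedges_def, card_filter, sum_product]

variable (G) in
theorem card_interedges_comm (s t : Finset V) : #(G.interedges s t) = #(G.interedges t s) :=
  letI := G.symm
  Rel.card_interedges_comm s t

variable [Fintype V] {n : ℕ} {lam : ℝ}

theorem IsRegularOfDegree.card_interedges_univ (hreg : G.IsRegularOfDegree n)
    (s : Finset V) : #(G.interedges s univ) = n * #s := by
  simp [card_interedges_eq_sum_card_filter, ← neighborFinset_eq_filter, hreg _, mul_comm]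

theorem IsRegularOfDegree.card_interedges_le (hreg : G.IsRegularOfDegree n)
    (s t : Finset V) : #(G.interedges s t) ≤ n * #t := by
  rw [card_interedges_comm, ← hreg.card_interedges_univ]
  exact card_le_card (G.interedges_mono subset_rfl (subset_univ s))

variable [DecidableEq V]

theorem IsRegularOfDegree.dotProduct_adjMatrix_mulVec (hreg : G.IsRegularOfDegree n)
    (x : V → ℝ) :
    x ⬝ᵥ (G.adjMatrix ℝ *ᵥ x) = n * ∑ v, x v ^ 2 - x ⬝ᵥ (G.lapMatrix ℝ *ᵥ x) := by
  rw [lapMatrix, sub_mulVec, dotProduct_sub, dotProduct_mulVec_degMatrix, mul_sum]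
  simp [hreg _, sq, mul_assoc]

variable (G) in
theorem dotProduct_lapMatrix_mulVec_indicator_sub_const (s : Finset V) (c : ℝ) :
    let x : V → ℝ := fun v ↦ (if v ∈ s then 1 else 0) - c
    x ⬝ᵥ (G.lapMatrix ℝ *ᵥ x) = #(G.interedges s sᶜ) := by
  intro x
  rw [← toLinearMap₂'_apply', lapMatrix_toLinearMap₂']
  have hsplit (v w : V) : (if G.Adj v w then (x v - x w) ^ 2 else 0) =
      (if v ∈ s ∧ w ∈ sᶜ ∧ G.Adj v w then 1 else 0) +
        (if v ∈ sᶜ ∧ w ∈ s ∧ G.Adj v w then 1 else 0) := by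
    simp only [x, sub_sub_sub_cancel_right]
    by_cases hv : v ∈ s <;> by_cases hw : w ∈ s <;> by_cases h : G.Adj v w <;>
      simp [hv, hw, h]
  have hcount (t u : Finset V) :
      ∑ v, ∑ w, (if v ∈ t ∧ w ∈ u ∧ G.Adj v w then (1 : ℝ) else 0) =
        #(G.interedges t u) := by
    simp only [← mk_mem_interedges_iff]
    rw [← Fintype.sum_prod_type']
    simp
  simp only [hsplit, sum_add_distrib, hcount, card_interedges_comm G sᶜ s]
  ring

variable (G) in
/-- For `n`-regular `G`: every eigenvalue of `A / n` on the orthogonal complement of the constant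
vectors is at most `lam`. -/
def IsSpectralExpander (n : ℕ) (lam : ℝ) : Prop :=
  ∀ x : V → ℝ, ∑ v, x v = 0 → x ⬝ᵥ (G.adjMatrix ℝ *ᵥ x) ≤ lam * n * ∑ v, x v ^ 2

theorem IsSpectralExpander.mul_card_le_card_interedges_compl [Nonempty V]
    (hreg : G.IsRegularOfDegree n) (hexp : G.IsSpectralExpander n lam) (s : Finset V) :
    (1 - lam) * n * #s * (1 - #s / Fintype.card V) ≤ #(G.interedges s sᶜ) := by
  set a : ℝ := #s / Fintype.card V
  have hNa : Fintype.card V * a = #s := mul_div_cancel₀ _ (by positivity)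
  set x : V → ℝ := fun v ↦ (if v ∈ s then 1 else 0) - a
  have hsum : ∑ v, x v = 0 := by
    simp only [x, sum_sub_distrib, sum_ite_mem, univ_inter, sum_const, nsmul_eq_mul, mul_one,
      card_univ, hNa, sub_self]
  have hsq : ∑ v, x v ^ 2 = #s * (1 - a) := by
    have hpt (v : V) : x v ^ 2 = (1 - 2 * a) * (if v ∈ s then 1 else 0) + a ^ 2 := by
      by_cases hv : v ∈ s <;> simp [x, hv]; ring
    simp only [hpt, sum_add_distrib, ← mul_sum, sum_ite_mem, univ_inter, sum_const, card_univ,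
      nsmul_eq_mul, mul_one]
    linear_combination a * hNa
  have hform := hreg.dotProduct_adjMatrix_mulVec x
  rw [dotProduct_lapMatrix_mulVec_indicator_sub_const] at hform
  have := hexp x hsum
  calc (1 - lam) * n * #s * (1 - a) = (1 - lam) * n * ∑ v, x v ^ 2 := by rw [hsq]; ring
    _ ≤ #(G.interedges s sᶜ) := by linarith

theorem IsSpectralExpander.mul_card_le_card_sub_card [Nonempty V]
    (hreg : G.IsRegularOfDegree n) (hexp : G.IsSpectralExpander n lam) (hn : 0 < n)
    {s t : Finset V} (hst : s ⊆ t) (hnbr : ∀ v ∈ s, ∀ w, G.Adj v w → w ∈ t) :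
    (1 - lam) * #s * (1 - #s / Fintype.card V) ≤ #t - #s := by
  have hboundary : G.interedges s sᶜ ⊆ G.interedges s (t \ s) := by
    rintro ⟨v, w⟩ he
    rw [mk_mem_interedges_iff, mem_compl] at he
    rw [mk_mem_interedges_iff, mem_sdiff]
    exact ⟨he.1, ⟨hnbr v he.1 w he.2.2, he.2.1⟩, he.2.2⟩
  have hcount : (#(G.interedges s sᶜ) : ℝ) ≤ n * (#t - #s) := by
    rw [← cast_card_sdiff hst]
    exact_mod_cast (card_le_card hboundary).trans (hreg.card_interedges_le s _)
  have hexpand := hexp.mul_card_le_card_interedges_compl hreg s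
  have hn' : (0 : ℝ) < n := by exact_mod_cast hn
  nlinarith

theorem IsSpectralExpander.mul_card_closedBall_le (hconn : G.Connected)
    (hreg : G.IsRegularOfDegree n) (hexp : G.IsSpectralExpander n lam) (hn : 0 < n)
    (hlam : lam ≤ 1) (u : V) (k : ℕ)
    (hhalf : (#(G.closedBall u k) : ℝ) ≤ Fintype.card V / 2) :
    (3 - lam) / 2 * #(G.closedBall u k) ≤ #(G.closedBall u (k + 1)) := by
  have := hconn.nonempty
  have hgrow := hexp.mul_card_le_card_sub_card hreg hn (closedBall_subset_closedBall_succ u k)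
    fun v hv w hadj ↦ hconn.mem_closedBall_succ_of_adj hv hadj
  have hN : (0 : ℝ) < Fintype.card V := by exact_mod_cast Fintype.card_pos
  have hfrac : 1 / 2 ≤ 1 - (#(G.closedBall u k) : ℝ) / Fintype.card V := by
    rw [le_sub_comm, div_le_iff₀ hN]
    linarith
  have : (0 : ℝ) ≤ (1 - lam) * #(G.closedBall u k) := by positivity
  nlinarith

theorem IsSpectralExpander.lt_two_mul_card_closedBall (hconn : G.Connected)
    (hreg : G.IsRegularOfDegree n) (hexp : G.IsSpectralExpander n lam) (hn : 0 < n)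
    (hlam : lam ≤ 1) {K : ℕ} (hK : (Fintype.card V : ℝ) / 2 < ((3 - lam) / 2) ^ K) (u : V) :
    Fintype.card V < 2 * #(G.closedBall u K) := by
  have hmono : Monotone fun k ↦ (#(G.closedBall u k) : ℝ) := monotone_nat_of_le_succ fun k ↦
    by exact_mod_cast card_le_card (closedBall_subset_closedBall_succ u k)
  have hcenter : (1 : ℝ) ≤ #(G.closedBall u 0) := by
    exact_mod_cast card_pos.2 ⟨u, self_mem_closedBall u 0⟩
  have hgrowth := lt_or_pow_le_of_mul_le_succ (by linarith) hmono hcenter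
    (hexp.mul_card_closedBall_le hconn hreg hn hlam u) K
  have : (Fintype.card V : ℝ) < 2 * #(G.closedBall u K) := by
    rcases hgrowth with h | h <;> linarith
  exact_mod_cast this

end SimpleGraph

theorem expander_diameter_bound_general
    (V : Type*) [Fintype V] [DecidableEq V]
    (hV : 2 ≤ Fintype.card V)
    (Γ : SimpleGraph V) [DecidableRel Γ.Adj]
    (hconn : Γ.Connected)
    (n : ℕ) (hreg : Γ.IsRegularOfDegree n)
    (lam : ℝ) (hlam1 : lam < 1)
    (hexp : ∀ x : V → ℝ, (∑ v : V, x v) = 0 →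
      x ⬝ᵥ ((Γ.adjMatrix ℝ) *ᵥ x) ≤ lam * n * ∑ v : V, (x v) ^ 2) :
    (Γ.diam : ℝ)
      ≤ 2 * Real.log ((Fintype.card V : ℝ) / 2) / Real.log ((3 - lam) / 2) + 3 := by
  have hΓ : Γ.IsSpectralExpander n lam := hexp
  have : Nontrivial V := Fintype.one_lt_card_iff_nontrivial.mp hV
  have hn : 0 < n := hreg (Classical.arbitrary V) ▸ hconn.preconnected.degree_pos_of_nontrivial _
  set q : ℝ := (3 - lam) / 2 with hq_def
  have hq : 1 < q := by linarith
  set x := Real.log ((Fintype.card V : ℝ) / 2) / Real.log q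
  have hx : 0 ≤ x := div_nonneg
    (Real.log_nonneg (by rw [le_div_iff₀ two_pos]; exact_mod_cast hV)) (Real.log_pos hq).le
  have hdiam : (Γ.diam : ℝ) ≤ 2 * (⌊x⌋₊ + 1 : ℕ) := by
    exact_mod_cast hconn.diam_le_of_lt_two_mul_card_closedBall <| hΓ.lt_two_mul_card_closedBall
      hconn hreg hn hlam1.le (lt_pow_natFloor_log_div_log_add_one hq)
  have hK : ((⌊x⌋₊ + 1 : ℕ) : ℝ) ≤ x + 1 := by push_cast; linarith [Nat.floor_le hx]
  rw [mul_div_assoc]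
  linarith

/-- **Bound on the diameter of a regular spectral expander.** For a connected
`n`-regular simple graph on at least two vertices whose adjacency matrix satisfies the
`λ̃`-expansion inequality with `λ̃ ∈ [0,1)`, the diameter is at most
`2·log(|V|/2)/log((3-λ̃)/2) + 3`. -/
theorem expander_diameter_bound
    (V : Type*) [Fintype V] [DecidableEq V]
    (hV : 2 ≤ Fintype.card V)
    (Γ : SimpleGraph V) [DecidableRel Γ.Adj]
    (hconn : Γ.Connected)
    (n : ℕ) (hreg : Γ.IsRegularOfDegree n)
    (lam : ℝ) (hlam0 : 0 ≤ lam) (hlam1 : lam < 1)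
    (hexp : ∀ x : V → ℝ, (∑ v : V, x v) = 0 →
      x ⬝ᵥ ((Γ.adjMatrix ℝ) *ᵥ x) ≤ lam * n * ∑ v : V, (x v) ^ 2) :
    (Γ.diam : ℝ)
      ≤ 2 * Real.log ((Fintype.card V : ℝ) / 2) / Real.log ((3 - lam) / 2) + 3 :=
  expander_diameter_bound_general V hV Γ hconn n hreg lam hlam1 hexp
end

section
/- Let Γ = (V,E) be an n-RIM, (V₀,…,V_{m−1}) a flowering cut collection of order m ≥ 2 on Γ with isomorphisms φ_i and multiplicity function #, and let w : V → ℝ be strictly positive and invariant under the cut isomorphisms, with w̃(v) := w(v)/#v. Then for every v ∈ V₀: ∑_{i=0}^{m−1} (1/#(φ_i(v))) · w(φ_i(v)) / |V|_w = w̃(v) / |V₀|_{w̃}. (Consequently, if a vertex u ∈ V is chosen with probability w(u)/|V|_w and then an index i is chosen uniformly at random among the #u indices with u ∈ V_i, the resulting vertex φ_i^{-1}(u) ∈ V₀ is distributed with probability w̃/|V₀|_{w̃}.) -/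
/-- If a vertex `u` of `V` is chosen with probability `w(u)/|V|_w` and then one of the
`#u` cuts containing it is chosen uniformly, the resulting vertex of `V₀` is
distributed as `w̃/|V₀|_{w̃}`: for every `v ∈ V₀`,
`∑ᵢ (1/#(φᵢ v)) · w(φᵢ v) / |V|_w = w̃(v) / |V₀|_{w̃}`. -/
theorem weighted_probability_identity
    (n : ℕ) (V : Type*) [Fintype V] [Nonempty V] [DecidableEq V]
    (E : V → Fin n → V) (jbar : Equiv.Perm (Fin n))
    (hE : ∀ (v : V) (j : Fin n), E (E v j) (jbar j) = v)
    (m : ℕ) (hm : 2 ≤ m)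
    (i0 : Fin m) (hi0 : (i0 : ℕ) = 0)
    (Vsets : Fin m → Finset V)
    (hcover : ∀ v : V, ∃ i : Fin m, v ∈ Vsets i)
    (φ : Fin m → V → V)
    (hφ0 : ∀ v ∈ Vsets i0, φ i0 v = v)
    (hφbij : ∀ i : Fin m, Set.BijOn (φ i) (Vsets i0 : Set V) (Vsets i : Set V))
    (hφedge : ∀ (i : Fin m), ∀ v ∈ Vsets i0, ∀ j : Fin n,
      φ i (if E v j ∈ Vsets i0 then E v j else v)
        = if E (φ i v) j ∈ Vsets i then E (φ i v) j else φ i v)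
    (hmultInv : ∀ (i : Fin m), ∀ v ∈ Vsets i0,
      cutMultiplicity Vsets (φ i v) = cutMultiplicity Vsets v)
    (w : V → ℝ) (hw : ∀ v : V, 0 < w v)
    (hwInv : ∀ (i : Fin m), ∀ v ∈ Vsets i0, w (φ i v) = w v) :
    ∀ v ∈ Vsets i0,
      (∑ i : Fin m,
          (1 / (cutMultiplicity Vsets (φ i v) : ℝ)) * w (φ i v) / (∑ u : V, w u))
        = (w v / (cutMultiplicity Vsets v : ℝ))
            / (∑ u ∈ Vsets i0, w u / (cutMultiplicity Vsets u : ℝ)) := by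
  intro v hv
  set wt : V → ℝ := fun u => w u / (cutMultiplicity Vsets u : ℝ) with hwt
  have hmultpos : ∀ u : V, 0 < cutMultiplicity Vsets u := by
    intro u
    obtain ⟨i, hi⟩ := hcover u
    exact Finset.card_pos.2 ⟨i, Finset.mem_filter.2 ⟨Finset.mem_univ i, hi⟩⟩
  have hmultne : ∀ u : V, (cutMultiplicity Vsets u : ℝ) ≠ 0 := fun u =>
    Nat.cast_ne_zero.2 (hmultpos u).ne'
  have hwt_pos : ∀ u : V, 0 < wt u := fun u =>
    div_pos (hw u) (by exact_mod_cast hmultpos u)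
  -- wt is invariant
  have hwtInv : ∀ (i : Fin m), ∀ x ∈ Vsets i0, wt (φ i x) = wt x := by
    intro i x hx
    simp only [hwt, hmultInv i x hx, hwInv i x hx]
  -- each cut has the same wt-sum as V₀
  have hcut : ∀ i : Fin m, ∑ u ∈ Vsets i, wt u = ∑ x ∈ Vsets i0, wt x := by
    intro i
    refine (Finset.sum_bij (fun x _ => φ i x) ?_ ?_ ?_ ?_).symm
    · intro x hx; exact (hφbij i).1 hx
    · intro a ha b hb h; exact (hφbij i).2.1 ha hb h
    · intro u hu
      obtain ⟨x, hx, hxu⟩ := (hφbij i).2.2 hu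
      exact ⟨x, hx, hxu⟩
    · intro x hx; exact (hwtInv i x hx).symm
  -- total weight identity
  have hsum : ∑ u : V, w u = (m : ℝ) * ∑ x ∈ Vsets i0, wt x := by
    have h1 : ∀ u : V, w u = ∑ i : Fin m, if u ∈ Vsets i then wt u else 0 := by
      intro u
      have h2 : (∑ i : Fin m, if u ∈ Vsets i then wt u else 0)
          = (cutMultiplicity Vsets u : ℝ) * wt u := by
        rw [Finset.sum_ite, Finset.sum_const, Finset.sum_const_zero, add_zero,
          nsmul_eq_mul]
        rfl
      rw [h2]
      show w u = (cutMultiplicity Vsets u : ℝ) * (w u / (cutMultiplicity Vsets u : ℝ))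
      rw [mul_div_assoc', mul_div_cancel_left₀ _ (hmultne u)]
    calc ∑ u : V, w u = ∑ u : V, ∑ i : Fin m, if u ∈ Vsets i then wt u else 0 :=
          Finset.sum_congr rfl fun u _ => h1 u
      _ = ∑ i : Fin m, ∑ u : V, if u ∈ Vsets i then wt u else 0 := Finset.sum_comm
      _ = ∑ i : Fin m, ∑ u ∈ Vsets i, wt u := by
          refine Finset.sum_congr rfl fun i _ => ?_
          rw [Finset.sum_ite_mem, Finset.univ_inter]
      _ = ∑ i : Fin m, ∑ x ∈ Vsets i0, wt x :=
          Finset.sum_congr rfl fun i _ => hcut i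
      _ = (m : ℝ) * ∑ x ∈ Vsets i0, wt x := by
          rw [Finset.sum_const, Finset.card_univ, Fintype.card_fin, nsmul_eq_mul]
  -- now finish
  have hT : 0 < ∑ x ∈ Vsets i0, wt x :=
    Finset.sum_pos (fun x _ => hwt_pos x) ⟨v, hv⟩
  have hmne : (m : ℝ) ≠ 0 := by positivity
  have hterm : ∀ i : Fin m,
      (1 / (cutMultiplicity Vsets (φ i v) : ℝ)) * w (φ i v) / (∑ u : V, w u)
        = wt v / ((m : ℝ) * ∑ x ∈ Vsets i0, wt x) := by
    intro i
    rw [hmultInv i v hv, hwInv i v hv, hsum, hwt]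
    ring
  rw [Finset.sum_congr rfl fun i _ => hterm i, Finset.sum_const, Finset.card_univ,
    Fintype.card_fin, nsmul_eq_mul]
  show (m : ℝ) * (wt v / ((m : ℝ) * ∑ x ∈ Vsets i0, wt x)) = wt v / ∑ x ∈ Vsets i0, wt x
  field_simp
end
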